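/- arXiv:2309.05237 — 6 statements merged into one kernel-verified Lean document; each statement's English description precedes it below -/
import Mathlib

section
/- Let A be a primitive PC(-1)-axial algebra over a field F of characteristic different from 2 and 3. Then A is a pseudo-composition algebra: there exists a nonzero symmetric bilinear form φ : A × A → F such that (x·x)·x = φ(x,x)·x for all x ∈ A. -/
open Submodule

variable {F : Type*} [Field F] {A : Type*} [NonUnitalNonAssocCommRing A]
  [Module F A] [SMulCommClass F A A] [IsScalarTower F A A]

variable (F) in
/-- The `lam`-eigenspace of the adjoint map of `a`. -/
def PCeig (a : A) (lam : F) : Submodule F A where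
  carrier := {x : A | a * x = lam • x}
  add_mem' := by
    intro x y hx hy
    simp only [Set.mem_setOf_eq] at hx hy ⊢
    rw [mul_add, hx, hy, smul_add]
  zero_mem' := by simp
  smul_mem' := by
    intro c x hx
    simp only [Set.mem_setOf_eq] at hx ⊢
    rw [mul_smul_comm, hx, smul_smul, smul_smul, mul_comm]

variable (F) in
/-- The fusion law `PC(η)` for an idempotent (axis) `a`. -/
structure IsPCAxis (η : F) (a : A) : Prop where
  idem : a * a = a
  decomp : PCeig F a 1 ⊔ PCeig F a η ⊔ PCeig F a (1/2 : F) = ⊤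
  fus11 : ∀ x ∈ PCeig F a 1, ∀ y ∈ PCeig F a 1, x * y ∈ PCeig F a 1
  fus1e : ∀ x ∈ PCeig F a 1, ∀ y ∈ PCeig F a η, x * y ∈ PCeig F a η
  fus1h : ∀ x ∈ PCeig F a 1, ∀ y ∈ PCeig F a (1/2 : F), x * y ∈ PCeig F a (1/2 : F)
  fusee : ∀ x ∈ PCeig F a η, ∀ y ∈ PCeig F a η, x * y ∈ PCeig F a 1
  fuseh : ∀ x ∈ PCeig F a η, ∀ y ∈ PCeig F a (1/2 : F), x * y ∈ PCeig F a (1/2 : F)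
  fushh : ∀ x ∈ PCeig F a (1/2 : F), ∀ y ∈ PCeig F a (1/2 : F),
    x * y ∈ PCeig F a 1 ⊔ PCeig F a η

variable (F) in
/-- A primitive axis: an axis with `A_1(a) = F·a` (one-dimensional). -/
def IsPrimPCAxis (η : F) (a : A) : Prop :=
  IsPCAxis F η a ∧ a ≠ 0 ∧ PCeig F a 1 = Submodule.span F {a}

variable (F A) in
/-- A `PC(η)`-axial algebra: generated, as a non-unital algebra, by a (nonempty) set of axes. -/
def IsPCAxialAlgebra (η : F) : Prop :=
  ∃ X : Set A, X.Nonempty ∧ (∀ a ∈ X, IsPCAxis F η a) ∧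
    NonUnitalAlgebra.adjoin F X = ⊤

variable (F A) in
/-- A primitive `PC(η)`-axial algebra: generated by a (nonempty) set of primitive axes. -/
def IsPrimPCAxialAlgebra (η : F) : Prop :=
  ∃ X : Set A, X.Nonempty ∧ (∀ a ∈ X, IsPrimPCAxis F η a) ∧
    NonUnitalAlgebra.adjoin F X = ⊤

/-!
For a primitive axis `c` we have `A = F c ⊕ A_{-1}(c) ⊕ A_{1/2}(c)`; let `λ_c` be the
`c`-coordinate. Because `η = -1`, the vector `(c y) z + c (y z) + (c z) y - λ_c(y) z - λ_c(z) y`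
always lies in `F c`, and its coefficient `Φ_c(y, z)` is a symmetric bilinear form. Comparing these
identities for two distinct (hence linearly independent) primitive axes `c, d` gives
`Φ_c(d, -) = λ_d`, so all the forms `Φ_c` agree once the primitive axes span `A`. They do: the
Miyamoto involution `τ_c` is an automorphism, so it permutes the primitive axes, and
`c d ∈ span {c, d, τ_c d}`. By linearity,
`(x y) z + x (y z) + (x z) y = Φ(x, y) z + Φ(x, z) y + Φ(y, z) x` for all `x`, and `x = y = z`
gives `3 (x x) x = 3 Φ(x, x) x`.
-/

section AxisAutomorphisms

omit [IsScalarTower F A A]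

theorem mem_PCeig {a x : A} {μ : F} : x ∈ PCeig F a μ ↔ a * x = μ • x := Iff.rfl

section Transport

variable {B : Type*} [NonUnitalNonAssocCommRing B] [Module F B] [SMulCommClass F B B]
  (e : A ≃ₗ[F] B) (he : ∀ x y, e (x * y) = e x * e y)
include he

theorem PCeig_map_linearEquiv (a : A) (μ : F) :
    PCeig F (e a) μ = (PCeig F a μ).map (e : A →ₗ[F] B) := by
  ext x
  obtain ⟨x, rfl⟩ := e.surjective x
  rw [mem_map_equiv, e.symm_apply_apply, mem_PCeig, mem_PCeig, ← he, ← map_smul,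
    e.injective.eq_iff]

theorem IsPCAxis.map_linearEquiv {η : F} {a : A} (ha : IsPCAxis F η a) :
    IsPCAxis F η (e a) := by
  have hfus {S T U : Submodule F A} (h : ∀ x ∈ S, ∀ y ∈ T, x * y ∈ U) :
      ∀ x ∈ S.map (e : A →ₗ[F] B), ∀ y ∈ T.map (e : A →ₗ[F] B),
        x * y ∈ U.map (e : A →ₗ[F] B) := by
    rintro _ ⟨x, hx, rfl⟩ _ ⟨y, hy, rfl⟩
    exact ⟨x * y, h x hx y hy, he x y⟩
  have hE := PCeig_map_linearEquiv e he a
  exact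
  { idem := by rw [← he, ha.idem]
    decomp := by
      simp only [hE, ← Submodule.map_sup, ha.decomp, Submodule.map_top, LinearEquiv.range]
    fus11 := by simpa only [hE] using hfus ha.fus11
    fus1e := by simpa only [hE] using hfus ha.fus1e
    fus1h := by simpa only [hE] using hfus ha.fus1h
    fusee := by simpa only [hE] using hfus ha.fusee
    fuseh := by simpa only [hE] using hfus ha.fuseh
    fushh := by simpa only [hE, ← Submodule.map_sup] using hfus ha.fushh }

theorem IsPrimPCAxis.map_linearEquiv {η : F} {a : A} (ha : IsPrimPCAxis F η a) :
    IsPrimPCAxis F η (e a) := by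
  refine ⟨ha.1.map_linearEquiv e he, e.map_ne_zero_iff.mpr ha.2.1, ?_⟩
  rw [PCeig_map_linearEquiv e he, ha.2.2, map_span, Set.image_singleton]
  rfl

end Transport

section Grading

omit [SMulCommClass F A A]

variable {P N : Submodule F A} (hPN : P ⊔ N = ⊤) {f : A →ₗ[F] A}
  (hfP : ∀ x ∈ P, f x = x) (hfN : ∀ x ∈ N, f x = -x)
include hPN hfP hfN

theorem involutive_of_sup_eq_top : Function.Involutive f := by
  intro x
  obtain ⟨p, hp, n, hn, rfl⟩ := mem_sup.mp (hPN.ge (mem_top (x := x)))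
  rw [map_add, hfP p hp, hfN n hn, map_add, map_neg, hfP p hp, hfN n hn, neg_neg]

theorem map_mul_of_sup_eq_top (hPP : ∀ x ∈ P, ∀ y ∈ P, x * y ∈ P)
    (hPN' : ∀ x ∈ P, ∀ y ∈ N, x * y ∈ N) (hNN : ∀ x ∈ N, ∀ y ∈ N, x * y ∈ P)
    (x y : A) :
    f (x * y) = f x * f y := by
  obtain ⟨p, hp, n, hn, rfl⟩ := mem_sup.mp (hPN.ge (mem_top (x := x)))
  obtain ⟨p', hp', n', hn', rfl⟩ := mem_sup.mp (hPN.ge (mem_top (x := y)))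
  have hnp : n * p' ∈ N := mul_comm p' n ▸ hPN' p' hp' n hn
  simp only [map_add, hfP _ hp, hfN _ hn, hfP _ hp', hfN _ hn', add_mul, mul_add,
    hfP _ (hPP p hp p' hp'), hfN _ (hPN' p hp n' hn'), hfN _ hnp, hfP _ (hNN n hn n' hn'),
    neg_mul, mul_neg]
  abel

end Grading

theorem mul_mul_of_mem_PCeig {c x : A} {μ : F} (hx : x ∈ PCeig F c μ) :
    c * (c * x) = (μ * μ) • x := by
  rw [mem_PCeig.mp hx, mul_smul_comm, mem_PCeig.mp hx, smul_smul]

section Miyamoto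

variable (F) in
/-- `1 + (8/3)(L_c² - 1)`: it is `1` on `A_1(c) ⊕ A_{-1}(c)`, where `L_c² = 1`, and `-1` on
`A_{1/2}(c)`, where `L_c² = 1/4`. -/
def miyamoto (c : A) : A →ₗ[F] A :=
  LinearMap.id + (8 / 3 : F) • (LinearMap.mulLeft F c ∘ₗ LinearMap.mulLeft F c - LinearMap.id)

variable {c : A}

theorem miyamoto_apply (x : A) : miyamoto F c x = x + (8 / 3 : F) • (c * (c * x) - x) := rfl

theorem miyamoto_eq_self {x : A} (hx : x ∈ PCeig F c 1 ⊔ PCeig F c (-1)) :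
    miyamoto F c x = x := by
  obtain ⟨e, he, v, hv, rfl⟩ := mem_sup.mp hx
  rw [miyamoto_apply, mul_add, mul_add, mul_mul_of_mem_PCeig he, mul_mul_of_mem_PCeig hv]
  module

theorem miyamoto_eq_neg [NeZero (2 : F)] [NeZero (3 : F)] {x : A}
    (hx : x ∈ PCeig F c (1 / 2)) : miyamoto F c x = -x := by
  rw [miyamoto_apply, mul_mul_of_mem_PCeig hx]
  match_scalars
  field_simp
  ring

theorem IsPCAxis.mul_mem_of_mem_sup_of_mem_sup {η : F} (hc : IsPCAxis F η c) {x y : A}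
    (hx : x ∈ PCeig F c 1 ⊔ PCeig F c η) (hy : y ∈ PCeig F c 1 ⊔ PCeig F c η) :
    x * y ∈ PCeig F c 1 ⊔ PCeig F c η := by
  obtain ⟨e, he, v, hv, rfl⟩ := mem_sup.mp hx
  obtain ⟨e', he', v', hv', rfl⟩ := mem_sup.mp hy
  rw [add_mul, mul_add, mul_add, mul_comm v e']
  exact add_mem (add_mem (mem_sup_left (hc.fus11 e he e' he'))
    (mem_sup_right (hc.fus1e e he v' hv'))) (add_mem (mem_sup_right (hc.fus1e e' he' v hv))
    (mem_sup_left (hc.fusee v hv v' hv')))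

theorem IsPCAxis.mul_mem_of_mem_sup_of_mem_half {η : F} (hc : IsPCAxis F η c) {x y : A}
    (hx : x ∈ PCeig F c 1 ⊔ PCeig F c η) (hy : y ∈ PCeig F c (1 / 2)) :
    x * y ∈ PCeig F c (1 / 2) := by
  obtain ⟨e, he, v, hv, rfl⟩ := mem_sup.mp hx
  rw [add_mul]
  exact add_mem (hc.fus1h e he y hy) (hc.fuseh v hv y hy)

variable [NeZero (2 : F)] [NeZero (3 : F)]

theorem IsPCAxis.miyamoto_involutive (hc : IsPCAxis F (-1) c) :
    Function.Involutive (miyamoto F c) :=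
  involutive_of_sup_eq_top hc.decomp (fun _ => miyamoto_eq_self) (fun _ => miyamoto_eq_neg)

theorem IsPCAxis.miyamoto_mul (hc : IsPCAxis F (-1) c) (x y : A) :
    miyamoto F c (x * y) = miyamoto F c x * miyamoto F c y :=
  map_mul_of_sup_eq_top hc.decomp (fun _ => miyamoto_eq_self) (fun _ => miyamoto_eq_neg)
    (fun _ hx _ => hc.mul_mem_of_mem_sup_of_mem_sup hx)
    (fun _ hx _ => hc.mul_mem_of_mem_sup_of_mem_half hx) hc.fushh x y

theorem IsPCAxis.isPrimPCAxis_miyamoto (hc : IsPCAxis F (-1) c) {d : A}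
    (hd : IsPrimPCAxis F (-1) d) : IsPrimPCAxis F (-1) (miyamoto F c d) :=
  hd.map_linearEquiv (LinearEquiv.ofInvolutive _ hc.miyamoto_involutive) hc.miyamoto_mul

end Miyamoto

end AxisAutomorphisms

section AxisCoord

omit [IsScalarTower F A A]

variable (F) in
/-- `(L_c + 1)(L_c - 1/2)`, the projection onto `A_1(c)` along `A_{-1}(c) ⊕ A_{1/2}(c)`. -/
def oneProj (c : A) : A →ₗ[F] A :=
  (LinearMap.mulLeft F c + LinearMap.id) ∘ₗ
    (LinearMap.mulLeft F c - (1 / 2 : F) • LinearMap.id)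

variable (F) in
open Classical in
/-- The coefficient `λ_c(y)` of `c` in `y ∈ F c ⊕ A_{-1}(c) ⊕ A_{1/2}(c)`; meaningful only when
`c` is a primitive axis. -/
noncomputable def axisCoord (c : A) : A →ₗ[F] F :=
  if h : ∃ f : A →ₗ[F] F, ∀ y, f y • c = oneProj F c y then h.choose else 0

variable {c : A}

theorem oneProj_apply (y : A) :
    oneProj F c y = c * (c * y - (1 / 2 : F) • y) + (c * y - (1 / 2 : F) • y) := rfl

theorem oneProj_of_mem {x : A} {μ : F} (hx : x ∈ PCeig F c μ) :
    oneProj F c x = ((μ + 1) * (μ - 1 / 2)) • x := by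
  simp only [oneProj_apply, mul_sub, mul_smul_comm, mem_PCeig.mp hx]
  module

theorem oneProj_self [NeZero (2 : F)] (hc : c * c = c) : oneProj F c c = c := by
  rw [oneProj_of_mem (show c ∈ PCeig F c 1 by rw [mem_PCeig, hc, one_smul])]
  match_scalars
  field_simp
  norm_num

theorem oneProj_eq_zero {n : A} (hn : n ∈ PCeig F c (-1) ⊔ PCeig F c (1 / 2)) :
    oneProj F c n = 0 := by
  obtain ⟨u, hu, p, hp, rfl⟩ := mem_sup.mp hn
  rw [map_add, oneProj_of_mem hu, oneProj_of_mem hp]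
  module

theorem IsPrimPCAxis.exists_eq_smul_add (hc : IsPrimPCAxis F (-1) c) (y : A) :
    ∃ t : F, ∃ n ∈ PCeig F c (-1) ⊔ PCeig F c (1 / 2), y = t • c + n := by
  have hy : y ∈ PCeig F c 1 ⊔ (PCeig F c (-1) ⊔ PCeig F c (1 / 2)) := by
    rw [← sup_assoc, hc.1.decomp]
    exact mem_top
  obtain ⟨e, he, n, hn, rfl⟩ := mem_sup.mp hy
  rw [hc.2.2] at he
  obtain ⟨t, rfl⟩ := mem_span_singleton.mp he
  exact ⟨t, n, hn, rfl⟩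

variable [NeZero (2 : F)]

theorem IsPrimPCAxis.oneProj_mem_span (hc : IsPrimPCAxis F (-1) c) (y : A) :
    oneProj F c y ∈ span F {c} := by
  obtain ⟨t, n, hn, rfl⟩ := hc.exists_eq_smul_add y
  rw [map_add, map_smul, oneProj_self hc.1.idem, oneProj_eq_zero hn, add_zero]
  exact smul_mem _ t (mem_span_singleton_self c)

theorem IsPrimPCAxis.axisCoord_smul (hc : IsPrimPCAxis F (-1) c) (y : A) :
    axisCoord F c y • c = oneProj F c y := by
  have h : ∃ f : A →ₗ[F] F, ∀ y, f y • c = oneProj F c y :=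
    ⟨LinearEquiv.coord F A c hc.2.1 ∘ₗ (oneProj F c).codRestrict _ hc.oneProj_mem_span,
      fun y => LinearEquiv.coord_apply_smul F A c hc.2.1 _⟩
  rw [axisCoord, dif_pos h]
  exact h.choose_spec y

theorem IsPrimPCAxis.axisCoord_self (hc : IsPrimPCAxis F (-1) c) : axisCoord F c c = 1 :=
  smul_left_injective F hc.2.1 <|
    (hc.axisCoord_smul c).trans ((oneProj_self hc.1.idem).trans (one_smul F c).symm)

theorem IsPrimPCAxis.axisCoord_eq_zero (hc : IsPrimPCAxis F (-1) c) {n : A}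
    (hn : n ∈ PCeig F c (-1) ⊔ PCeig F c (1 / 2)) : axisCoord F c n = 0 :=
  smul_left_injective F hc.2.1 <|
    (hc.axisCoord_smul n).trans ((oneProj_eq_zero hn).trans (zero_smul F c).symm)

variable [NeZero (3 : F)] {d : A}

theorem IsPrimPCAxis.mul_mem_span (hc : IsPrimPCAxis F (-1) c) (hd : IsPrimPCAxis F (-1) d) :
    c * d ∈ span F {x : A | IsPrimPCAxis F (-1) x} := by
  have h : c * d =
      (2 * axisCoord F c d) • c - (1 / 4 : F) • d - (3 / 4 : F) • miyamoto F c d := by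
    rw [mul_smul, hc.axisCoord_smul, oneProj_apply, miyamoto_apply, mul_sub, mul_smul_comm]
    match_scalars <;> field_simp [show (4 : F) = 2 * 2 by norm_num]
    all_goals ring
  rw [h]
  exact sub_mem (sub_mem (smul_mem _ _ (subset_span hc)) (smul_mem _ _ (subset_span hd)))
    (smul_mem _ _ (subset_span (hc.1.isPrimPCAxis_miyamoto hd)))

end AxisCoord

section AxisForm

variable (F) in
/-- Half the full polarisation of the cube `x ↦ (x x) x`. -/
def polarCube : A →ₗ[F] A →ₗ[F] A →ₗ[F] A :=
  (LinearMap.mul F A).compr₂ (LinearMap.mul F A) +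
    (LinearMap.llcomp F A A A).compl₁₂ (LinearMap.mul F A) (LinearMap.mul F A) +
    ((LinearMap.llcomp F A A A).compl₁₂ (LinearMap.mul F A) (LinearMap.mul F A)).flip

variable (F) in
/-- The coefficient of `c` in `polarCube c y z = λ_c(y) z + λ_c(z) y + Φ_c(y, z) c`. -/
noncomputable def axisForm (c : A) : A →ₗ[F] A →ₗ[F] F :=
  (polarCube F c).compr₂ (axisCoord F c) -
    (2 : F) • (LinearMap.mul F F).compl₁₂ (axisCoord F c) (axisCoord F c)

variable {c : A}

theorem polarCube_apply (y z : A) :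
    polarCube F c y z = (c * y) * z + c * (y * z) + (c * z) * y := by
  rw [mul_comm (c * z) y]
  rfl

theorem axisForm_apply (y z : A) :
    axisForm F c y z =
      axisCoord F c (polarCube F c y z) - 2 * (axisCoord F c y * axisCoord F c z) := rfl

theorem polarCube_comm (y z : A) : polarCube F c y z = polarCube F c z y := by
  simp only [polarCube_apply, mul_comm y z]
  abel

theorem axisForm_comm (y z : A) : axisForm F c y z = axisForm F c z y := by
  rw [axisForm_apply, axisForm_apply, polarCube_comm, mul_comm (axisCoord F c y)]

variable [NeZero (2 : F)]

theorem IsPrimPCAxis.polarCube_self_left (hc : IsPrimPCAxis F (-1) c) (z : A) :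
    polarCube F c c z = z + (2 * axisCoord F c z) • c := by
  rw [mul_smul, hc.axisCoord_smul, oneProj_apply, polarCube_apply, hc.1.idem, mul_comm (c * z) c,
    mul_sub, mul_smul_comm]
  match_scalars <;> field_simp
  all_goals ring

theorem IsPCAxis.polarCube_mem (hc : IsPCAxis F (-1) c) {n m : A}
    (hn : n ∈ PCeig F c (-1) ⊔ PCeig F c (1 / 2)) (hm : m ∈ PCeig F c (-1) ⊔ PCeig F c (1 / 2)) :
    polarCube F c n m ∈ PCeig F c 1 := by
  have h_neg_neg : ∀ u ∈ PCeig F c (-1), ∀ v ∈ PCeig F c (-1), polarCube F c u v ∈ PCeig F c 1 := by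
    intro u hu v hv
    have huv := hc.fusee u hu v hv
    have : polarCube F c u v = -(u * v) := by
      rw [polarCube_apply, mem_PCeig.mp hu, mem_PCeig.mp hv, mem_PCeig.mp huv, smul_mul_assoc,
        smul_mul_assoc, mul_comm v u]
      module
    exact this ▸ neg_mem huv
  -- The only place where `η = -1` matters: in general these terms add up to `(1 + η) (u q)`.
  have h_neg_half : ∀ u ∈ PCeig F c (-1), ∀ q ∈ PCeig F c (1 / 2), polarCube F c u q = 0 := by
    intro u hu q hq
    rw [polarCube_apply, mem_PCeig.mp hu, mem_PCeig.mp hq, mem_PCeig.mp (hc.fuseh u hu q hq),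
      smul_mul_assoc, smul_mul_assoc, mul_comm q u]
    match_scalars
    field_simp
    ring
  have h_half_half : ∀ p ∈ PCeig F c (1 / 2), ∀ q ∈ PCeig F c (1 / 2),
      polarCube F c p q ∈ PCeig F c 1 := by
    intro p hp q hq
    obtain ⟨e, he, w, hw, hpq⟩ := mem_sup.mp (hc.fushh p hp q hq)
    have : polarCube F c p q = (2 : F) • e := by
      rw [polarCube_apply, mem_PCeig.mp hp, mem_PCeig.mp hq, smul_mul_assoc, smul_mul_assoc,
        mul_comm q p, ← hpq, mul_add, mem_PCeig.mp he, mem_PCeig.mp hw]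
      match_scalars <;> field_simp
      all_goals ring
    exact this ▸ smul_mem _ _ he
  obtain ⟨u, hu, p, hp, rfl⟩ := mem_sup.mp hn
  obtain ⟨v, hv, q, hq, rfl⟩ := mem_sup.mp hm
  simp only [map_add, LinearMap.add_apply, h_neg_half u hu q hq, polarCube_comm p v,
    h_neg_half v hv p hp, add_zero, zero_add]
  exact add_mem (h_neg_neg u hu v hv) (h_half_half p hp q hq)

theorem IsPrimPCAxis.polarCube_eq (hc : IsPrimPCAxis F (-1) c) (y z : A) :
    polarCube F c y z =
      axisCoord F c y • z + axisCoord F c z • y + axisForm F c y z • c := by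
  set r := polarCube F c y z - axisCoord F c y • z - axisCoord F c z • y with hr
  have hr_mem : r ∈ span F {c} := by
    obtain ⟨t, n, hn, rfl⟩ := hc.exists_eq_smul_add y
    obtain ⟨s, m, hm, rfl⟩ := hc.exists_eq_smul_add z
    have hr_eq : r = (t * s) • c + polarCube F c n m := by
      simp only [hr, map_add, map_smul, LinearMap.add_apply, LinearMap.smul_apply,
        hc.polarCube_self_left, polarCube_comm n c, hc.axisCoord_self,
        hc.axisCoord_eq_zero hn, hc.axisCoord_eq_zero hm]
      module
    rw [hr_eq]
    exact add_mem (smul_mem _ _ (mem_span_singleton_self c)) (hc.2.2 ▸ hc.1.polarCube_mem hn hm)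
  obtain ⟨u, hu⟩ := mem_span_singleton.mp hr_mem
  have hu' : u = axisForm F c y z := by
    have := congrArg (axisCoord F c) hu
    rw [map_smul, hc.axisCoord_self, smul_eq_mul, mul_one] at this
    rw [this, hr, axisForm_apply, map_sub, map_sub, map_smul, map_smul, smul_eq_mul, smul_eq_mul]
    ring
  rw [← hu', hu, hr]
  abel

theorem IsPrimPCAxis.axisForm_self_left (hc : IsPrimPCAxis F (-1) c) (z : A) :
    axisForm F c c z = axisCoord F c z := by
  rw [axisForm_apply, hc.polarCube_self_left, map_add, map_smul, hc.axisCoord_self, smul_eq_mul]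
  ring

end AxisForm

variable (F) in
theorem linearIndependent_pair_of_isIdempotentElem {c d : A} (hc : IsIdempotentElem c)
    (hd : IsIdempotentElem d) (hc0 : c ≠ 0) (hd0 : d ≠ 0) (hcd : c ≠ d) :
    LinearIndependent F ![c, d] := by
  refine (LinearIndependent.pair_iff' hc0).mpr fun r hr => ?_
  subst hr
  have hr : IsIdempotentElem r := by
    refine smul_left_injective F hc0 ?_
    simpa only [smul_mul_smul_comm, hc.eq] using hd.eq
  rcases IsIdempotentElem.iff_eq_zero_or_one.mp hr with rfl | rfl
  · exact hd0 (zero_smul F c)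
  · exact hcd (one_smul F c).symm

section PrimitiveAxes

variable [NeZero (2 : F)] {c d : A}

theorem IsPrimPCAxis.axisForm_axis_left (hc : IsPrimPCAxis F (-1) c) (hd : IsPrimPCAxis F (-1) d)
    (z : A) : axisForm F c d z = axisCoord F d z := by
  rcases eq_or_ne c d with rfl | hcd
  · exact hc.axisForm_self_left z
  have hindep := LinearIndependent.pair_iff.mp <|
    linearIndependent_pair_of_isIdempotentElem F hc.1.idem hd.1.idem hc.2.1 hd.2.1 hcd
  have hswap (w : A) :
      axisCoord F c d • w + axisCoord F c w • d + axisForm F c d w • c =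
        axisCoord F d c • w + axisCoord F d w • c + axisForm F d c w • d := by
    rw [← hc.polarCube_eq, ← hd.polarCube_eq, polarCube_apply, polarCube_apply, mul_comm d c,
      mul_comm c (d * w), mul_comm d (c * w)]
    abel
  have hcd_coord : axisCoord F c d = axisCoord F d c := by
    have h := hswap c
    rw [axisForm_comm, hc.axisForm_self_left, hc.axisCoord_self, one_smul] at h
    have := (hindep (2 * (axisCoord F c d - axisCoord F d c)) (1 - axisForm F d c c)
      (by linear_combination (norm := module) h)).1
    exact sub_eq_zero.mp ((mul_eq_zero.mp this).resolve_left two_ne_zero)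
  have h := hswap z
  rw [hcd_coord] at h
  have := (hindep (axisForm F c d z - axisCoord F d z) (axisCoord F c z - axisForm F d c z)
    (by linear_combination (norm := module) h)).1
  exact sub_eq_zero.mp this

variable [NeZero (3 : F)]

theorem span_primAxes_eq_top (hA : IsPrimPCAxialAlgebra F A (-1)) :
    span F {x : A | IsPrimPCAxis F (-1) x} = ⊤ := by
  set S := span F {x : A | IsPrimPCAxis F (-1) x}
  have hmul (x y : A) (hx : x ∈ S) (hy : y ∈ S) : x * y ∈ S := by
    have hxy := apply_mem_map₂ (LinearMap.mul F A) hx hy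
    rw [map₂_span_span] at hxy
    refine span_le.mpr ?_ hxy
    rintro _ ⟨c, hc, d, hd, rfl⟩
    exact hc.mul_mem_span hd
  obtain ⟨X, -, hX, htop⟩ := hA
  have hle : NonUnitalAlgebra.adjoin F X ≤ S.toNonUnitalSubalgebra hmul :=
    NonUnitalAlgebra.adjoin_le fun a ha => subset_span (hX a ha)
  rw [htop] at hle
  exact eq_top_iff.mpr fun x _ => hle trivial

theorem axisForm_eq_of_isPrimPCAxis (hA : IsPrimPCAxialAlgebra F A (-1))
    (hc : IsPrimPCAxis F (-1) c) (hd : IsPrimPCAxis F (-1) d) : axisForm F c = axisForm F d :=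
  LinearMap.ext_on (span_primAxes_eq_top hA) fun _ he =>
    LinearMap.ext fun z => by rw [hc.axisForm_axis_left he, hd.axisForm_axis_left he]

theorem IsPrimPCAxis.polarCube_eq_axisForm (hA : IsPrimPCAxialAlgebra F A (-1))
    (hc : IsPrimPCAxis F (-1) c) (x y z : A) :
    polarCube F x y z =
      axisForm F c x y • z + axisForm F c x z • y + axisForm F c y z • x := by
  have hx : x ∈ span F {x : A | IsPrimPCAxis F (-1) x} := (span_primAxes_eq_top hA).ge mem_top
  induction hx using span_induction with
  | mem d hd =>
    rw [hd.polarCube_eq, hc.axisForm_axis_left hd, hc.axisForm_axis_left hd,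
      axisForm_eq_of_isPrimPCAxis hA hc hd]
  | zero => simp
  | add x x' _ _ ih ih' =>
    simp only [map_add, LinearMap.add_apply, ih, ih', add_smul, smul_add]
    abel
  | smul t x _ ih =>
    simp only [map_smul, LinearMap.smul_apply, ih, smul_eq_mul]
    module

end PrimitiveAxes

/-- a primitive `PC(-1)`-axial algebra over a field of characteristic `≠ 2, 3`
is a pseudo-composition algebra. -/
theorem stmt0 (h2 : (2 : F) ≠ 0) (h3 : (3 : F) ≠ 0)
    (hA : IsPrimPCAxialAlgebra F A (-1 : F)) :
    ∃ φ : A →ₗ[F] A →ₗ[F] F, φ ≠ 0 ∧ (∀ x y : A, φ x y = φ y x) ∧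
      ∀ x : A, (x * x) * x = φ x x • x := by
  have : NeZero (2 : F) := ⟨h2⟩
  have : NeZero (3 : F) := ⟨h3⟩
  obtain ⟨a, ha⟩ : ∃ a : A, IsPrimPCAxis F (-1) a :=
    let ⟨_, ⟨a, haX⟩, hX, _⟩ := hA; ⟨a, hX a haX⟩
  refine ⟨axisForm F a, fun h => ?_, axisForm_comm, fun x => ?_⟩
  · have h1 := ha.axisForm_self_left a
    rw [h, ha.axisCoord_self] at h1
    exact zero_ne_one h1
  · have h := ha.polarCube_eq_axisForm hA x x x
    rw [polarCube_apply, mul_comm x (x * x)] at h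
    exact smul_right_injective A (three_ne_zero (α := F))
      (by linear_combination (norm := module) h)
end

section
/- Let A be a PC(η)-axial algebra, let a and b be primitive axes of A, and set α = φ_a(b). Then a(ab) = (1/2)·((1-η)·α·a - η·b + (1+2η)·ab). -/
open Submodule

variable {F : Type*} [Field F] {A : Type*} [NonUnitalNonAssocCommRing A]
  [Module F A] [SMulCommClass F A A] [IsScalarTower F A A]

theorem mul_smul_self_add_add_of_eigen {R M : Type*} [SMul R M] [NonUnitalNonAssocSemiring M]
    [SMulCommClass R M M] {a u v : M} {μ ν : R} (α : R) (ha : a * a = a)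
    (hu : a * u = μ • u) (hv : a * v = ν • v) :
    a * (α • a + u + v) = α • a + μ • u + ν • v := by
  rw [mul_add, mul_add, mul_smul_comm, ha, hu, hv]

theorem stmt4_general (η : F) (h2 : (2 : F) ≠ 0)
    (a b : A) (ha : IsPrimPCAxis F η a)
    (α : F) (u v : A)
    (hu : u ∈ PCeig F a η) (hv : v ∈ PCeig F a (1 / 2 : F))
    (hbd : b = α • a + u + v) :
    a * (a * b) =
      (1 / 2 : F) • (((1 - η) * α) • a - η • b + (1 + 2 * η) • (a * b)) := by
  have hab : a * b = α • a + η • u + (1 / 2 : F) • v :=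
    hbd ▸ mul_smul_self_add_add_of_eigen α ha.1.idem hu hv
  have haab : a * (a * b) = α • a + η • η • u + (1 / 2 : F) • (1 / 2 : F) • v := by
    rw [hab]
    exact mul_smul_self_add_add_of_eigen α ha.1.idem (smul_mem _ η hu) (smul_mem _ _ hv)
  rw [haab, hab, hbd]
  match_scalars <;> field_simp <;> ring

/-- for primitive axes `a`, `b` with `α = φ_a(b)`,
`a(ab) = (1/2)((1-η)α a - η b + (1+2η) ab)`. -/
theorem stmt4 (η : F) (h2 : (2 : F) ≠ 0) (hη1 : η ≠ 1) (hηh : η ≠ 1 / 2)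
    (hA : IsPCAxialAlgebra F A η)
    (a b : A) (ha : IsPrimPCAxis F η a) (hb : IsPrimPCAxis F η b)
    (α : F) (u v : A)
    (hu : u ∈ PCeig F a η) (hv : v ∈ PCeig F a (1 / 2 : F))
    (hbd : b = α • a + u + v) :
    a * (a * b) =
      (1 / 2 : F) • (((1 - η) * α) • a - η • b + (1 + 2 * η) • (a * b)) :=
  stmt4_general η h2 a b ha α u v hu hv hbd
end

section
/- Let A be a primitive PC(η)-axial algebra. Then A admits a unique Frobenius form (·,·) such that (a,a) = 1 for all primitive axes a ∈ A; moreover, for every primitive axis a and every x ∈ A one has (a,x) = φ_a(x). -/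
open Submodule

variable {F : Type*} [Field F] {A : Type*} [NonUnitalNonAssocCommRing A]
  [Module F A] [SMulCommClass F A A] [IsScalarTower F A A]

-- ############ my additions ############
namespace PCaux

lemma mem_eig {a x : A} {lam : F} : x ∈ PCeig F a lam ↔ a * x = lam • x := Iff.rfl

variable (F) in
structure Good (η : F) : Prop where
  two : (2:F) ≠ 0
  e1 : η ≠ 1
  eh : η ≠ 1/2

variable {η : F}

lemma Good.half_add_half (hg : Good F η) : (1/2 : F) + 1/2 = 1 := by
  rw [show (1/2 + 1/2 : F) = 2/2 by ring, div_self hg.two]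

lemma Good.half_ne_zero (hg : Good F η) : (1/2 : F) ≠ 0 :=
  div_ne_zero one_ne_zero hg.two

lemma Good.half_sub_one_ne (hg : Good F η) : ((1/2 : F) - 1) ≠ 0 := by
  have h := hg.half_add_half
  intro h0
  have h1 : (1/2:F) = 1 := by linear_combination h0
  exact one_ne_zero (α := F) (by linear_combination h - 2*h1)

lemma Good.one_sub_eta_ne (hg : Good F η) : (1 - η : F) ≠ 0 :=
  fun h0 => hg.e1 (by linear_combination -h0)

lemma Good.eta_sub_half_ne (hg : Good F η) : (η - (1/2 : F)) ≠ 0 :=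
  sub_ne_zero.mpr hg.eh

/-- directness of the eigenspace decomposition -/
lemma direct (hg : Good F η) {c x1 xe xh : A} (h1 : x1 ∈ PCeig F c 1)
    (he : xe ∈ PCeig F c η)
    (hh : xh ∈ PCeig F c (1/2 : F)) (hsum : x1 + xe + xh = 0) :
    x1 = 0 ∧ xe = 0 ∧ xh = 0 := by
  rw [mem_eig] at h1 he hh
  rw [one_smul] at h1
  have eq1 : x1 + η • xe + (1/2 : F) • xh = 0 := by
    have : c * (x1 + xe + xh) = x1 + η • xe + (1/2 : F) • xh := by
      rw [mul_add, mul_add, h1, he, hh]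
    rw [hsum, mul_zero] at this
    exact this.symm
  have eq2 : x1 + (η*η) • xe + ((1/2 : F)*(1/2)) • xh = 0 := by
    have : c * (x1 + η • xe + (1/2 : F) • xh)
        = x1 + (η*η) • xe + ((1/2 : F)*(1/2)) • xh := by
      rw [mul_add, mul_add, h1, mul_smul_comm, mul_smul_comm, he, hh, smul_smul, smul_smul]
    rw [eq1, mul_zero] at this
    exact this.symm
  have hxe : xe = 0 := by
    have key : ((η-1)*((1/2:F)-1)*(η-(1/2))) • xe
        = ((1/2:F)-1) • (x1 + (η*η) • xe + ((1/2 : F)*(1/2)) • xh)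
          - ((1/2:F)-1) • (x1 + η • xe + (1/2 : F) • xh)
          - ((1/2:F)*(1/2)-(1/2)) • (x1 + η • xe + (1/2 : F) • xh)
          + ((1/2:F)*(1/2)-(1/2)) • (x1 + xe + xh) := by module
    rw [eq1, eq2, hsum] at key
    simp only [smul_zero, add_zero, sub_zero, zero_sub, neg_zero] at key
    rcases smul_eq_zero.mp key with h | h
    · exact absurd h (mul_ne_zero (mul_ne_zero (sub_ne_zero.mpr hg.e1)
        hg.half_sub_one_ne) hg.eta_sub_half_ne)
    · exact h
  have hxh : xh = 0 := by
    have key : (((1/2):F) - 1) • xh =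
        (x1 + η • xe + (1/2 : F) • xh) - (x1 + xe + xh) - (η - 1) • xe := by module
    rw [eq1, hsum, hxe] at key
    simp only [smul_zero, sub_zero, zero_sub, neg_zero, sub_self] at key
    rcases smul_eq_zero.mp key with h | h
    · exact absurd h hg.half_sub_one_ne
    · exact h
  refine ⟨?_, hxe, hxh⟩
  rw [hxe, hxh, add_zero, add_zero] at hsum
  exact hsum

lemma self_mem_eig1 {c : A} (hc : IsPCAxis F η c) : c ∈ PCeig F c 1 := by
  rw [mem_eig, one_smul]; exact hc.idem

/-- existence of decomposition -/
lemma exists_decomp {c : A} (hc : IsPrimPCAxis F η c) (x : A) :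
    ∃ k : F, ∃ u ∈ PCeig F c η, ∃ v ∈ PCeig F c (1/2 : F), x = k • c + u + v := by
  have hx : x ∈ PCeig F c 1 ⊔ PCeig F c η ⊔ PCeig F c (1/2 : F) := by
    rw [hc.1.decomp]; trivial
  obtain ⟨y, hy, v, hv, hyv⟩ := mem_sup.mp hx
  obtain ⟨x1, h1, u, hu, hx1u⟩ := mem_sup.mp hy
  rw [hc.2.2] at h1
  obtain ⟨k, hk⟩ := mem_span_singleton.mp h1
  exact ⟨k, u, hu, v, hv, by rw [← hyv, ← hx1u, hk]⟩

lemma decomp_unique (hg : Good F η) {c : A} (hc : IsPrimPCAxis F η c)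
    {k k' : F} {u u' v v' : A}
    (hu : u ∈ PCeig F c η) (hv : v ∈ PCeig F c (1/2 : F))
    (hu' : u' ∈ PCeig F c η) (hv' : v' ∈ PCeig F c (1/2 : F))
    (heq : k • c + u + v = k' • c + u' + v') : k = k' ∧ u = u' ∧ v = v' := by
  have hz : (k - k') • c + (u - u') + (v - v') = 0 := by
    rw [← sub_eq_zero] at heq; rw [← heq]; module
  obtain ⟨e1, e2, e3⟩ := direct hg
    (smul_mem _ _ (self_mem_eig1 hc.1)) (sub_mem hu hu') (sub_mem hv hv') hz
  refine ⟨?_, sub_eq_zero.mp e2, sub_eq_zero.mp e3⟩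
  rcases smul_eq_zero.mp e1 with h | h
  · exact sub_eq_zero.mp h
  · exact absurd h hc.2.1


section phi

/-- the coefficient of `x` along a primitive axis `c` -/
noncomputable def phiFun {η : F} {c : A} (hc : IsPrimPCAxis F η c) (x : A) : F :=
  (exists_decomp hc x).choose

variable {η : F}

lemma phi_spec {c : A} (hc : IsPrimPCAxis F η c) (x : A) :
    ∃ u ∈ PCeig F c η, ∃ v ∈ PCeig F c (1/2 : F), x = phiFun hc x • c + u + v :=
  (exists_decomp hc x).choose_spec

lemma phi_unique (hg : Good F η) {c : A} (hc : IsPrimPCAxis F η c) {x : A} {k : F} {u v : A}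
    (hu : u ∈ PCeig F c η) (hv : v ∈ PCeig F c (1/2 : F)) (hx : x = k • c + u + v) :
    phiFun hc x = k := by
  obtain ⟨u', hu', v', hv', hx'⟩ := phi_spec hc x
  exact (decomp_unique hg hc hu' hv' hu hv (by rw [← hx', ← hx])).1

lemma phi_add (hg : Good F η) {c : A} (hc : IsPrimPCAxis F η c) (x y : A) :
    phiFun hc (x + y) = phiFun hc x + phiFun hc y := by
  obtain ⟨u, hu, v, hv, hx⟩ := phi_spec hc x
  obtain ⟨u', hu', v', hv', hy⟩ := phi_spec hc y
  refine phi_unique hg hc (add_mem hu hu') (add_mem hv hv') ?_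
  conv_lhs => rw [hx, hy]
  module

lemma phi_smul (hg : Good F η) {c : A} (hc : IsPrimPCAxis F η c) (k : F) (x : A) :
    phiFun hc (k • x) = k * phiFun hc x := by
  obtain ⟨u, hu, v, hv, hx⟩ := phi_spec hc x
  refine phi_unique hg hc (smul_mem _ k hu) (smul_mem _ k hv) ?_
  conv_lhs => rw [hx]
  module

/-- the projection functional of a primitive axis, as a linear map -/
noncomputable def phiL (hg : Good F η) {c : A} (hc : IsPrimPCAxis F η c) : A →ₗ[F] F where
  toFun := phiFun hc
  map_add' := phi_add hg hc
  map_smul' := by intro k x; simpa using phi_smul hg hc k x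

lemma phiL_apply (hg : Good F η) {c : A} (hc : IsPrimPCAxis F η c) (x : A) :
    phiL hg hc x = phiFun hc x := rfl

lemma phiL_unique (hg : Good F η) {c : A} (hc : IsPrimPCAxis F η c) {x : A} {k : F} {u v : A}
    (hu : u ∈ PCeig F c η) (hv : v ∈ PCeig F c (1/2 : F)) (hx : x = k • c + u + v) :
    phiL hg hc x = k := phi_unique hg hc hu hv hx

lemma phiL_self (hg : Good F η) {c : A} (hc : IsPrimPCAxis F η c) : phiL hg hc c = 1 :=
  phiL_unique hg hc (zero_mem _) (zero_mem _) (by rw [one_smul, add_zero, add_zero])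

lemma phiL_eta (hg : Good F η) {c : A} (hc : IsPrimPCAxis F η c) {u : A}
    (hu : u ∈ PCeig F c η) : phiL hg hc u = 0 :=
  phiL_unique hg hc hu (zero_mem _) (by rw [zero_smul, zero_add, add_zero])

lemma phiL_half (hg : Good F η) {c : A} (hc : IsPrimPCAxis F η c) {v : A}
    (hv : v ∈ PCeig F c (1/2 : F)) : phiL hg hc v = 0 :=
  phiL_unique hg hc (zero_mem _) hv (by rw [zero_smul, zero_add, zero_add])

end phi

section symm

variable {η : F}

/-- THE key two-generated lemma: `φ_c(d) = φ_d(c)` for primitive axes `c`, `d`. -/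
lemma phi_symm (hg : Good F η) {c d : A} (hc : IsPrimPCAxis F η c)
    (hd : IsPrimPCAxis F η d) : phiFun hc d = phiFun hd c := by
  obtain ⟨u, hu, v, hv, hdec⟩ := phi_spec hc d
  obtain ⟨p, hp, q, hq, hcdec⟩ := phi_spec hd c
  set δ := phiFun hc d with hδdef
  set t := phiFun hd c with htdef
  -- atomic products
  have hcc : c*c = c := hc.1.idem
  have hcu : c*u = η • u := hu
  have hcv : c*v = (1/2 : F) • v := hv
  have huc : u*c = η • u := by rw [mul_comm]; exact hcu
  have hvc : v*c = (1/2 : F) • v := by rw [mul_comm]; exact hcv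
  have hdd : d*d = d := hd.1.idem
  have hdp : d*p = η • p := hp
  have hdq : d*q = (1/2 : F) • q := hq
  have huu1 : u*u ∈ PCeig F c 1 := hc.1.fusee u hu u hu
  rw [hc.2.2] at huu1
  obtain ⟨κ, hκ⟩ := mem_span_singleton.mp huu1
  have hvv1 : v*v ∈ PCeig F c 1 ⊔ PCeig F c η := hc.1.fushh v hv v hv
  obtain ⟨w1, hw1, ρ, hρ, hwρ⟩ := mem_sup.mp hvv1
  rw [hc.2.2] at hw1
  obtain ⟨ν, hν⟩ := mem_span_singleton.mp hw1
  have hvv : v*v = ν • c + ρ := by rw [← hwρ, hν]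
  have huv_mem : u*v ∈ PCeig F c (1/2 : F) := hc.1.fuseh u hu v hv
  -- relations from idempotency of d
  have exp1 : d*d = (δ*δ + κ + ν) • c + (ρ + (2*(δ*η)) • u)
      + ((2*(δ*(1/2:F))) • v + (2:F) • (u*v)) := by
    conv_lhs => rw [hdec]
    simp only [mul_add, add_mul, smul_mul_assoc, mul_smul_comm, smul_smul]
    rw [hcc, hcu, hcv, huc, hvc, ← hκ, hvv, show v*u = u*v from mul_comm v u]
    module
  have E : (δ*δ + κ + ν) • c + (ρ + (2*(δ*η)) • u)
      + ((2*(δ*(1/2:F))) • v + (2:F) • (u*v)) = δ • c + u + v := by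
    rw [← exp1, hdd]; exact hdec
  have hz : ((δ*δ + κ + ν) - δ) • c + ((ρ + (2*(δ*η)) • u) - u)
      + (((2*(δ*(1/2:F))) • v + (2:F) • (u*v)) - v) = 0 := by
    rw [← sub_eq_zero] at E
    rw [← E]; module
  obtain ⟨E1, E2, E3⟩ := direct hg (smul_mem _ _ (self_mem_eig1 hc.1))
    (sub_mem (add_mem hρ (smul_mem _ _ hu)) hu)
    (sub_mem (add_mem (smul_mem _ _ hv) (smul_mem _ _ huv_mem)) hv) hz
  have R1 : δ*δ + κ + ν = δ := by
    rcases smul_eq_zero.mp E1 with h | h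
    · exact sub_eq_zero.mp h
    · exact absurd h hc.2.1
  have R2 : ρ = (1 - 2*(δ*η)) • u := by
    have h := sub_eq_zero.mp E2
    rw [sub_smul, one_smul]
    exact eq_sub_of_add_eq h
  have R3 : (2:F) • (u*v) = (1 - 2*(δ*(1/2:F))) • v := by
    have h := sub_eq_zero.mp E3
    rw [sub_smul, one_smul]
    exact eq_sub_of_add_eq' h
  have h2h : (2:F)*(1/2) = 1 := by rw [two_mul]; exact hg.half_add_half
  have huv : u*v = ((1/2:F)*(1 - 2*(δ*(1/2:F)))) • v := by
    calc u*v = ((1/2:F)*2) • (u*v) := by rw [mul_comm (1/2:F) 2, h2h, one_smul]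
    _ = (1/2:F) • ((2:F) • (u*v)) := by rw [← smul_smul]
    _ = (1/2:F) • ((1 - 2*(δ*(1/2:F))) • v) := by rw [R3]
    _ = ((1/2:F)*(1 - 2*(δ*(1/2:F)))) • v := by rw [smul_smul]
  have hvv2 : v*v = ν • c + (1 - 2*(δ*η)) • u := by rw [hvv, R2]
  -- the resolvent computation, d-side
  have hdc : d*c = δ • c + η • u + (1/2:F) • v := by
    conv_lhs => rw [hdec]
    simp only [add_mul, smul_mul_assoc]
    rw [hcc, huc, hvc]
  have hdc' : d*c = t • d + η • p + (1/2:F) • q := by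
    conv_lhs => rw [hcdec]
    simp only [mul_add, mul_smul_comm]
    rw [hdd, hdp, hdq]
  have hddc : d*(d*c) = t • d + (η*η) • p + ((1/2:F)*(1/2)) • q := by
    conv_lhs => rw [hdc']
    simp only [mul_add, mul_smul_comm, smul_smul]
    rw [hdd, hdp, hdq]
    module
  -- the resolvent computation, c-side
  have hddc2 : d*(d*c) = (δ*δ + η*κ + (1/2:F)*ν) • c
      + (δ*(η*η) + δ*η + (1/2:F)*(1 - 2*(δ*η))) • u
      + (δ*((1/2:F)*(1/2)) + (1/2:F)*((1/2:F)*(1 - 2*(δ*(1/2:F)))) + δ*(1/2:F)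
          + η*((1/2:F)*(1 - 2*(δ*(1/2:F))))) • v := by
    conv_lhs => rw [hdc, hdec]
    simp only [mul_add, add_mul, smul_mul_assoc, mul_smul_comm, smul_smul]
    rw [hcc, hcu, hcv, huc, hvc, ← hκ, hvv2, huv, show v*u = u*v from mul_comm v u, huv]
    module
  set K := t*((1-η)*(1-(1/2:F))) with hKdef
  set Pc := δ*δ + η*κ + (1/2:F)*ν - (η+(1/2:F))*δ + η*(1/2:F) with hPcdef
  set Pu := δ*(η*η) + δ*η + (1/2:F)*(1 - 2*(δ*η)) - (η+(1/2:F))*η with hPudef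
  set Pv := δ*((1/2:F)*(1/2)) + (1/2:F)*((1/2:F)*(1 - 2*(δ*(1/2:F)))) + δ*(1/2:F)
      + η*((1/2:F)*(1 - 2*(δ*(1/2:F)))) - (η+(1/2:F))*(1/2:F) with hPvdef
  have sideD : d*(d*c) - (η+(1/2:F)) • (d*c) + (η*(1/2:F)) • c = K • d := by
    rw [hddc]
    conv_lhs => rw [hdc', hcdec]
    rw [hKdef]; module
  have sideC : d*(d*c) - (η+(1/2:F)) • (d*c) + (η*(1/2:F)) • c
      = Pc • c + Pu • u + Pv • v := by
    rw [hddc2, hdc, hPcdef, hPudef, hPvdef]; module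
  have main : Pc • c + Pu • u + Pv • v = K • d := by rw [← sideC, sideD]
  rw [hdec] at main
  have main2 : (Pc - K*δ) • c + (Pu - K) • u + (Pv - K) • v = 0 := by
    rw [← sub_eq_zero] at main
    rw [← main]; module
  obtain ⟨Z1, Z2, Z3⟩ := direct hg (smul_mem _ _ (self_mem_eig1 hc.1))
    (smul_mem _ _ hu) (smul_mem _ _ hv) main2
  -- now the case analysis
  show δ = t
  by_cases hv0 : v = 0
  · by_cases hu0 : u = 0
    · -- d = δ • c, hence d = c
      have hd' : d = δ • c := by rw [hdec, hu0, hv0, add_zero, add_zero]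
      have hδδ : (δ*δ - δ) • c = 0 := by
        have h' : d*d = (δ*δ) • c := by
          conv_lhs => rw [hd']
          simp only [smul_mul_assoc, mul_smul_comm, smul_smul]
          rw [hcc]
        rw [hdd, hd'] at h'
        rw [sub_smul, ← h', sub_self]
      have hδ1 : δ = 1 := by
        rcases smul_eq_zero.mp hδδ with h | h
        · have h' : δ*(δ-1) = 0 := by linear_combination h
          rcases mul_eq_zero.mp h' with h0 | h1
          · exfalso; apply hd.2.1; rw [hd', h0, zero_smul]
          · linear_combination h1
        · exact absurd h hc.2.1
      have hdceq : d = c := by rw [hd', hδ1, one_smul]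
      have ht1 : t = 1 := by
        rw [htdef, ← hdceq]
        exact phi_unique hg hd (zero_mem _) (zero_mem _)
          (by rw [one_smul, add_zero, add_zero])
      rw [hδ1, ht1]
    · -- v = 0, u ≠ 0 : forces η = -1
      have hvv0 : (0:A) = ν • c + (1 - 2*(δ*η)) • u := by
        have h := hvv2; rw [hv0, zero_mul] at h; exact h
      obtain ⟨W1, W2, -⟩ := direct hg (smul_mem _ _ (self_mem_eig1 hc.1))
        (smul_mem _ _ hu) (zero_mem _) (by rw [add_zero, ← hvv0])
      have hν0 : ν = 0 := by
        rcases smul_eq_zero.mp W1 with h | h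
        · exact h
        · exact absurd h hc.2.1
      have he0 : 1 - 2*(δ*η) = 0 := by
        rcases smul_eq_zero.mp W2 with h | h
        · exact h
        · exact absurd h hu0
      have Z2' : Pu - K = 0 := by
        rcases smul_eq_zero.mp Z2 with h | h
        · exact h
        · exact absurd h hu0
      have Z1' : Pc - K*δ = 0 := by
        rcases smul_eq_zero.mp Z1 with h | h
        · exact h
        · exact absurd h hc.2.1
      have hκval : κ = δ - δ*δ := by linear_combination R1 - hν0
      have hδη : δ*η = 1/2 := by
        have h1 : 2*(δ*η) = 1 := by linear_combination -he0
        exact mul_left_cancel₀ hg.two (by rw [h1, h2h])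
      rw [hPudef, hKdef] at Z2'
      rw [hPcdef, hKdef] at Z1'
      have hE : δ*(δ*η^2 + δ*η - η^2 - (1/2:F)*η)
          - (δ^2 - η*δ^2 - (1/2:F)*δ + η*(1/2:F)) = 0 := by
        linear_combination δ*Z2' - Z1' - (δ*(1/2:F))*he0 + η*hκval + (1/2:F)*hν0
      have hIV : 2*(δ*(1/2:F)) - 2*((1/2:F)*η) - δ^2*(1-η) = 0 := by
        linear_combination hE - (δ*η + δ - η)*hδη
      have hcubic : (η+1)*(2*η-1)^2 = 0 := by
        linear_combination (-4*η^2)*hIV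
          + (4*η*(η-1)*δ + 4*(1/2:F)*(3*η-1))*hδη
          + ((6*η-2)*(1/2:F) - 4*η^3 + 3*η - 1)*h2h
      have h2η : (2*η - 1 : F) ≠ 0 := by
        intro h0
        exact hg.eh (by linear_combination (1/2:F)*h0 - η*h2h)
      have hηm1 : η = -1 := by
        rcases mul_eq_zero.mp hcubic with h | h
        · exact eq_neg_of_add_eq_zero_left h
        · exact absurd h (pow_ne_zero _ h2η)
      linear_combination Z2' - ((δ-1)*η + 1 - 2*δ*(1/2:F) - (1/2:F) + t*(1-(1/2:F)))*hηm1
        - (1+δ+t)*h2h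
  · -- v ≠ 0 : direct comparison of the v-coefficients
    have Z3' : Pv - K = 0 := by
      rcases smul_eq_zero.mp Z3 with h | h
      · exact h
      · exact absurd h hv0
    have H1 : (2:F)*(1/2) - 1 = 0 := by rw [h2h, sub_self]
    have hPv : Pv = δ*((1-η)*(1-(1/2:F))) := by
      rw [hPvdef]
      linear_combination (-(δ*((1/2:F)*(1/2))) - δ*η*(1/2:F) + δ - δ*η)*H1
    have hcancel : δ*((1-η)*(1-(1/2:F))) = t*((1-η)*(1-(1/2:F))) := by
      rw [← hPv]; rw [hKdef] at Z3'; linear_combination Z3'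
    have hne : ((1-η)*(1-(1/2:F))) ≠ 0 := by
      apply mul_ne_zero hg.one_sub_eta_ne
      intro h0
      exact hg.half_sub_one_ne (by linear_combination -h0)
    exact mul_right_cancel₀ hne hcancel

end symm

section tau

variable {η : F}

lemma mul_mem_plus {c : A} (hc : IsPCAxis F η c) {x y : A}
    (hx : x ∈ PCeig F c 1 ⊔ PCeig F c η) (hy : y ∈ PCeig F c 1 ⊔ PCeig F c η) :
    x * y ∈ PCeig F c 1 ⊔ PCeig F c η := by
  obtain ⟨x1, h1, xe, he, rfl⟩ := mem_sup.mp hx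
  obtain ⟨y1, k1, ye, ke, rfl⟩ := mem_sup.mp hy
  rw [add_mul, mul_add, mul_add]
  refine add_mem (add_mem (le_sup_left (α := Submodule F A) (hc.fus11 _ h1 _ k1))
      (le_sup_right (α := Submodule F A) (hc.fus1e _ h1 _ ke)))
    (add_mem (le_sup_right (α := Submodule F A)
        (by rw [mul_comm]; exact hc.fus1e _ k1 _ he))
      (le_sup_left (α := Submodule F A) (hc.fusee _ he _ ke)))

lemma mul_mem_plus_half {c : A} (hc : IsPCAxis F η c) {x v : A}
    (hx : x ∈ PCeig F c 1 ⊔ PCeig F c η) (hv : v ∈ PCeig F c (1/2 : F)) :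
    x * v ∈ PCeig F c (1/2 : F) := by
  obtain ⟨x1, h1, xe, he, rfl⟩ := mem_sup.mp hx
  rw [add_mul]
  exact add_mem (hc.fus1h _ h1 _ hv) (hc.fuseh _ he _ hv)

lemma isCompl_half_plus (hg : Good F η) {c : A} (hc : IsPrimPCAxis F η c) :
    IsCompl (PCeig F c (1/2 : F)) (PCeig F c 1 ⊔ PCeig F c η) := by
  constructor
  · rw [disjoint_def]
    intro x hxh hxp
    obtain ⟨x1, h1, xe, he, hxe⟩ := mem_sup.mp hxp
    have hsum : x1 + xe + (-x) = 0 := by rw [hxe, add_neg_cancel]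
    obtain ⟨-, -, h3⟩ := direct hg h1 he (neg_mem hxh) hsum
    exact neg_eq_zero.mp h3
  · rw [codisjoint_iff, sup_comm]
    exact hc.1.decomp

/-- the Miyamoto involution of a primitive axis -/
noncomputable def tauL (hg : Good F η) {c : A} (hc : IsPrimPCAxis F η c) : A →ₗ[F] A :=
  LinearMap.id - (2:F) • ((PCeig F c (1/2 : F)).subtype ∘ₗ
    (PCeig F c (1/2 : F)).linearProjOfIsCompl _ (isCompl_half_plus hg hc))

lemma tauL_apply_plus (hg : Good F η) {c : A} (hc : IsPrimPCAxis F η c) {x : A}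
    (hx : x ∈ PCeig F c 1 ⊔ PCeig F c η) : tauL hg hc x = x := by
  have hp : (PCeig F c (1/2 : F)).linearProjOfIsCompl _ (isCompl_half_plus hg hc) x = 0 :=
    Submodule.linearProjOfIsCompl_apply_right (isCompl_half_plus hg hc) ⟨x, hx⟩
  simp [tauL, hp]

lemma tauL_apply_half (hg : Good F η) {c : A} (hc : IsPrimPCAxis F η c) {v : A}
    (hv : v ∈ PCeig F c (1/2 : F)) : tauL hg hc v = -v := by
  have hp : (PCeig F c (1/2 : F)).linearProjOfIsCompl _ (isCompl_half_plus hg hc) v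
      = ⟨v, hv⟩ :=
    Submodule.linearProjOfIsCompl_apply_left (isCompl_half_plus hg hc) ⟨v, hv⟩
  have hτ : tauL hg hc v = v - (2:F) • v := by simp [tauL, hp]
  rw [hτ, two_smul]
  abel

lemma exists_ph (hg : Good F η) {c : A} (hc : IsPrimPCAxis F η c) (x : A) :
    ∃ xp ∈ PCeig F c 1 ⊔ PCeig F c η, ∃ xh ∈ PCeig F c (1/2 : F), x = xp + xh := by
  have hx : x ∈ (PCeig F c 1 ⊔ PCeig F c η) ⊔ PCeig F c (1/2 : F) := by
    rw [hc.1.decomp]; trivial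
  obtain ⟨xp, hp, xh, hh, hxe⟩ := mem_sup.mp hx
  exact ⟨xp, hp, xh, hh, hxe.symm⟩

lemma tauL_mul (hg : Good F η) {c : A} (hc : IsPrimPCAxis F η c) (x y : A) :
    tauL hg hc (x * y) = tauL hg hc x * tauL hg hc y := by
  obtain ⟨xp, hxp, xh, hxh, rfl⟩ := exists_ph hg hc x
  obtain ⟨yp, hyp, yh, hyh, rfl⟩ := exists_ph hg hc y
  have hpp := mul_mem_plus hc.1 hxp hyp
  have hph := mul_mem_plus_half hc.1 hxp hyh
  have hhp : xh * yp ∈ PCeig F c (1/2 : F) := by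
    rw [mul_comm]; exact mul_mem_plus_half hc.1 hyp hxh
  have hhh : xh * yh ∈ PCeig F c 1 ⊔ PCeig F c η := hc.1.fushh _ hxh _ hyh
  have hexp : (xp + xh) * (yp + yh) = xp*yp + xp*yh + xh*yp + xh*yh := by
    rw [add_mul, mul_add, mul_add]; abel
  rw [hexp, map_add, map_add, map_add,
    tauL_apply_plus hg hc hpp, tauL_apply_half hg hc hph, tauL_apply_half hg hc hhp,
    tauL_apply_plus hg hc hhh, map_add, map_add,
    tauL_apply_plus hg hc hxp, tauL_apply_half hg hc hxh,
    tauL_apply_plus hg hc hyp, tauL_apply_half hg hc hyh]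
  simp only [mul_add, add_mul, mul_neg, neg_mul, neg_neg]
  abel

lemma tauL_invol (hg : Good F η) {c : A} (hc : IsPrimPCAxis F η c) (x : A) :
    tauL hg hc (tauL hg hc x) = x := by
  obtain ⟨xp, hxp, xh, hxh, rfl⟩ := exists_ph hg hc x
  rw [map_add, tauL_apply_plus hg hc hxp, tauL_apply_half hg hc hxh, map_add,
    tauL_apply_plus hg hc hxp, map_neg, tauL_apply_half hg hc hxh, neg_neg]

lemma tauL_mem_eig (hg : Good F η) {c : A} (hc : IsPrimPCAxis F η c) {d x : A} {lam : F}
    (hx : x ∈ PCeig F d lam) : tauL hg hc x ∈ PCeig F (tauL hg hc d) lam := by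
  rw [mem_eig] at hx ⊢
  rw [← tauL_mul, hx, map_smul]

lemma tauL_mem_eig' (hg : Good F η) {c : A} (hc : IsPrimPCAxis F η c) {d x : A} {lam : F}
    (hx : x ∈ PCeig F (tauL hg hc d) lam) : tauL hg hc x ∈ PCeig F d lam := by
  have := tauL_mem_eig hg hc (d := tauL hg hc d) hx
  rwa [tauL_invol] at this

lemma tauL_axis (hg : Good F η) {c : A} (hc : IsPrimPCAxis F η c) {d : A}
    (hd : IsPrimPCAxis F η d) : IsPrimPCAxis F η (tauL hg hc d) := by
  have hidem : tauL hg hc d * tauL hg hc d = tauL hg hc d := by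
    rw [← tauL_mul, hd.1.idem]
  have hsurj : Function.Surjective (tauL hg hc) :=
    fun x => ⟨tauL hg hc x, tauL_invol hg hc x⟩
  have hmap : ∀ lam : F, Submodule.map (tauL hg hc) (PCeig F d lam)
      ≤ PCeig F (tauL hg hc d) lam := by
    rintro lam _ ⟨x, hx, rfl⟩
    exact tauL_mem_eig hg hc hx
  refine ⟨⟨hidem, ?_, ?_, ?_, ?_, ?_, ?_, ?_⟩, ?_, ?_⟩
  · -- decomp
    refine le_antisymm le_top ?_
    calc (⊤ : Submodule F A) = Submodule.map (tauL hg hc) ⊤ := by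
          rw [Submodule.map_top, LinearMap.range_eq_top.mpr hsurj]
      _ = Submodule.map (tauL hg hc) (PCeig F d 1 ⊔ PCeig F d η ⊔ PCeig F d (1/2 : F)) := by
          rw [hd.1.decomp]
      _ ≤ _ := by
          rw [Submodule.map_sup, Submodule.map_sup]
          exact sup_le_sup (sup_le_sup (hmap 1) (hmap η)) (hmap (1/2 : F))
  · intro x hx y hy
    have := tauL_mem_eig hg hc (hd.1.fus11 _ (tauL_mem_eig' hg hc hx) _ (tauL_mem_eig' hg hc hy))
    rwa [tauL_mul, tauL_invol, tauL_invol] at this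
  · intro x hx y hy
    have := tauL_mem_eig hg hc (hd.1.fus1e _ (tauL_mem_eig' hg hc hx) _ (tauL_mem_eig' hg hc hy))
    rwa [tauL_mul, tauL_invol, tauL_invol] at this
  · intro x hx y hy
    have := tauL_mem_eig hg hc (hd.1.fus1h _ (tauL_mem_eig' hg hc hx) _ (tauL_mem_eig' hg hc hy))
    rwa [tauL_mul, tauL_invol, tauL_invol] at this
  · intro x hx y hy
    have := tauL_mem_eig hg hc (hd.1.fusee _ (tauL_mem_eig' hg hc hx) _ (tauL_mem_eig' hg hc hy))
    rwa [tauL_mul, tauL_invol, tauL_invol] at this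
  · intro x hx y hy
    have := tauL_mem_eig hg hc (hd.1.fuseh _ (tauL_mem_eig' hg hc hx) _ (tauL_mem_eig' hg hc hy))
    rwa [tauL_mul, tauL_invol, tauL_invol] at this
  · intro x hx y hy
    have hm := hd.1.fushh _ (tauL_mem_eig' hg hc hx) _ (tauL_mem_eig' hg hc hy)
    obtain ⟨s, hs, r, hr, hsr⟩ := mem_sup.mp hm
    have hx2 : x * y = tauL hg hc s + tauL hg hc r := by
      rw [← map_add, hsr, tauL_mul hg hc (tauL hg hc x) (tauL hg hc y),
        tauL_invol, tauL_invol]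
    rw [hx2]
    exact add_mem (le_sup_left (α := Submodule F A) (tauL_mem_eig hg hc hs))
      (le_sup_right (α := Submodule F A) (tauL_mem_eig hg hc hr))
  · intro h0
    apply hd.2.1
    have := tauL_invol hg hc d
    rw [h0, map_zero] at this
    exact this.symm
  · refine le_antisymm ?_ ?_
    · intro x hx
      have hx' := tauL_mem_eig' hg hc hx
      rw [hd.2.2] at hx'
      obtain ⟨k, hk⟩ := mem_span_singleton.mp hx'
      refine mem_span_singleton.mpr ⟨k, ?_⟩
      have : tauL hg hc (k • d) = tauL hg hc (tauL hg hc x) := by rw [hk]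
      rw [tauL_invol, map_smul] at this
      exact this
    · rw [span_le, Set.singleton_subset_iff]
      have hm : tauL hg hc d ∈ PCeig F (tauL hg hc d) 1 := by
        rw [mem_eig, one_smul]; exact hidem
      exact hm

lemma phi_tau (hg : Good F η) {c : A} (hc : IsPrimPCAxis F η c) {d : A}
    (hd : IsPrimPCAxis F η d) (x : A) :
    phiFun (tauL_axis hg hc hd) (tauL hg hc x) = phiFun hd x := by
  obtain ⟨u, hu, v, hv, hx⟩ := phi_spec hd x
  refine phi_unique hg (tauL_axis hg hc hd) (tauL_mem_eig hg hc hu) (tauL_mem_eig hg hc hv) ?_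
  conv_lhs => rw [hx]
  rw [map_add, map_add, map_smul]

end tau

section spanning

variable {η : F}

lemma mul_axes_mem_span (hg : Good F η) {c d : A} (hc : IsPrimPCAxis F η c)
    (hd : IsPrimPCAxis F η d) :
    c * d ∈ span F {e : A | IsPrimPCAxis F η e} := by
  obtain ⟨u, hu, v, hv, hdec⟩ := phi_spec hc d
  set δ := phiFun hc d with hδdef
  have hcmem : c ∈ PCeig F c 1 ⊔ PCeig F c η :=
    le_sup_left (α := Submodule F A) (self_mem_eig1 hc.1)
  have humem : u ∈ PCeig F c 1 ⊔ PCeig F c η := le_sup_right (α := Submodule F A) hu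
  have hτd : tauL hg hc d = δ • c + u - v := by
    conv_lhs => rw [hdec]
    rw [map_add, map_add, map_smul, tauL_apply_plus hg hc hcmem,
      tauL_apply_plus hg hc humem, tauL_apply_half hg hc hv, sub_eq_add_neg]
  have h2v : d - tauL hg hc d = (2:F) • v := by
    rw [hτd]
    conv_lhs => rw [hdec]
    module
  have h2h' : (1/2:F)*2 = 1 := by
    rw [mul_comm, two_mul]; exact hg.half_add_half
  have hveq : v = (1/2:F) • (d - tauL hg hc d) := by
    rw [h2v, smul_smul, h2h', one_smul]
  have hcd1 : c*d = δ • c + η • u + (1/2:F) • v := by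
    conv_lhs => rw [hdec]
    rw [mul_add, mul_add, mul_smul_comm, hc.1.idem, (hu : c*u = η • u),
      (hv : c*v = (1/2:F) • v)]
  have hkey : c*d = (δ * (1-η)) • c + η • d + ((1/2:F) - η) • v := by
    rw [hcd1]
    conv_rhs => rw [hdec]
    module
  rw [hkey]
  refine add_mem (add_mem (smul_mem _ _ (subset_span hc)) (smul_mem _ _ (subset_span hd)))
    (smul_mem _ _ ?_)
  rw [hveq]
  exact smul_mem _ _ (sub_mem (subset_span hd) (subset_span (tauL_axis hg hc hd)))

lemma span_axes_eq_top (hg : Good F η) (hA : IsPrimPCAxialAlgebra F A η) :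
    span F {e : A | IsPrimPCAxis F η e} = ⊤ := by
  obtain ⟨X, -, hXax, hXadj⟩ := hA
  set S := span F {e : A | IsPrimPCAxis F η e} with hS
  have H : ∀ x, x ∈ S → ∀ y, y ∈ S → x*y ∈ S := by
    intro x hx
    refine span_induction (p := fun x _ => ∀ y, y ∈ S → x*y ∈ S) ?_ ?_ ?_ ?_ hx
    · intro cc hcc y hy
      refine span_induction (p := fun y _ => cc*y ∈ S) ?_ ?_ ?_ ?_ hy
      · intro dd hdd
        exact mul_axes_mem_span hg hcc hdd
      · show cc * 0 ∈ S
        rw [mul_zero]; exact zero_mem _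
      · intro a b _ _ iha ihb
        show cc * (a + b) ∈ S
        rw [mul_add]; exact add_mem iha ihb
      · intro k a _ ih
        show cc * (k • a) ∈ S
        rw [mul_smul_comm]; exact smul_mem _ _ ih
    · intro y _
      show (0:A) * y ∈ S
      rw [zero_mul]; exact zero_mem _
    · intro a b _ _ iha ihb y hy
      show (a + b) * y ∈ S
      rw [add_mul]; exact add_mem (iha y hy) (ihb y hy)
    · intro k a _ ih y hy
      show (k • a) * y ∈ S
      rw [smul_mul_assoc]; exact smul_mem _ _ (ih y hy)
  have hle : NonUnitalAlgebra.adjoin F X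
      ≤ S.toNonUnitalSubalgebra (fun x y hx hy => H x hx y hy) :=
    NonUnitalAlgebra.adjoin_le (fun a ha => subset_span (hXax a ha))
  rw [hXadj] at hle
  refine eq_top_iff.mpr (fun x _ => ?_)
  exact hle (show x ∈ ⊤ from trivial)

end spanning

section form

variable {η : F}

theorem exists_form (hg : Good F η) (hA : IsPrimPCAxialAlgebra F A η) :
    ∃ B : A →ₗ[F] A →ₗ[F] F,
      (∀ (c : A) (hc : IsPrimPCAxis F η c), B c = phiL hg hc) ∧
      (∀ x y : A, B x y = B y x) ∧
      (∀ x y z : A, B (x*y) z = B x (y*z)) := by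
  classical
  have hspan : span F {e : A | IsPrimPCAxis F η e} = ⊤ := span_axes_eq_top hg hA
  obtain ⟨bs, hbs_sub, hbs_span, hbs_li⟩ :=
    exists_linearIndependent F {e : A | IsPrimPCAxis F η e}
  have hbs_top : ⊤ ≤ span F (Set.range (Subtype.val : bs → A)) := by
    rw [Subtype.range_val, hbs_span, hspan]
  let bb : Module.Basis bs F A := Module.Basis.mk hbs_li hbs_top
  have hbax : ∀ i : bs, IsPrimPCAxis F η (i : A) := fun i => hbs_sub i.2
  set B : A →ₗ[F] A →ₗ[F] F := bb.constr F (fun i => phiL hg (hbax i)) with hBdef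
  have hBb : ∀ i : bs, B (i : A) = phiL hg (hbax i) := by
    intro i
    have h := bb.constr_basis F (fun i => phiL hg (hbax i)) i
    rwa [show bb i = (i : A) from Module.Basis.mk_apply hbs_li hbs_top i] at h
  have key : ∀ (c : A) (hc : IsPrimPCAxis F η c), B c = phiL hg hc := by
    intro c hc
    have hflip : ∀ (e : A) (he : IsPrimPCAxis F η e), B.flip e = phiL hg he := by
      intro e he
      apply Module.Basis.ext bb
      intro i
      rw [show bb i = (i : A) from Module.Basis.mk_apply hbs_li hbs_top i]
      show B (i : A) e = phiL hg he (i : A)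
      rw [hBb i]
      exact phi_symm hg (hbax i) he
    apply LinearMap.ext_on hspan
    intro e he
    calc B c e = B.flip e c := rfl
    _ = phiL hg he c := by rw [hflip e he]
    _ = phiL hg hc e := phi_symm hg he hc
  have hsymm : ∀ x y : A, B x y = B y x := by
    have hfl : B.flip = B := by
      apply LinearMap.ext_on hspan
      intro c hc
      apply LinearMap.ext_on hspan
      intro e he
      show B e c = B c e
      rw [key e he, key c hc]
      exact phi_symm hg he hc
    intro x y
    conv_rhs => rw [← hfl]
    rfl
  have htau : ∀ (d : A) (hd : IsPrimPCAxis F η d) (x y : A),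
      B (tauL hg hd x) (tauL hg hd y) = B x y := by
    intro d hd
    have hB2 : B.compl₁₂ (tauL hg hd) (tauL hg hd) = B := by
      apply LinearMap.ext_on hspan
      intro c hc
      apply LinearMap.ext_on hspan
      intro e he
      show B (tauL hg hd c) (tauL hg hd e) = B c e
      rw [key _ (tauL_axis hg hd hc), key c hc]
      exact phi_tau hg hd hc e
    intro x y
    conv_rhs => rw [← hB2]
    rfl
  have horth : ∀ (d : A) (hd : IsPrimPCAxis F η d) {p q : A}, p ∈ PCeig F d η →
      q ∈ PCeig F d (1/2:F) → B p q = 0 := by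
    intro d hd p q hp hq
    have h1 := htau d hd p q
    rw [tauL_apply_plus hg hd (le_sup_right (α := Submodule F A) hp),
      tauL_apply_half hg hd hq, map_neg] at h1
    have h2 : (2:F) * B p q = 0 := by linear_combination -h1
    exact (mul_eq_zero.mp h2).resolve_left hg.two
  have hBax : ∀ (d : A) (hd : IsPrimPCAxis F η d) (w : A), B d w = phiFun hd w := by
    intro d hd w
    rw [key d hd]
    exact phiL_apply hg hd w
  have hfrobax : ∀ (d : A) (hd : IsPrimPCAxis F η d) (x z : A), B (x*d) z = B x (d*z) := by
    intro d hd x z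
    obtain ⟨ux, hux, vx, hvx, hxdec⟩ := phi_spec hd x
    obtain ⟨uz, huz, vz, hvz, hzdec⟩ := phi_spec hd z
    have hdx : x*d = phiFun hd x • d + η • ux + (1/2:F) • vx := by
      rw [mul_comm]
      conv_lhs => rw [hxdec]
      rw [mul_add, mul_add, mul_smul_comm, hd.1.idem,
        (show d * ux = η • ux from hux), (show d * vx = (1/2:F) • vx from hvx)]
    have hdz : d*z = phiFun hd z • d + η • uz + (1/2:F) • vz := by
      conv_lhs => rw [hzdec]
      rw [mul_add, mul_add, mul_smul_comm, hd.1.idem,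
        (show d * uz = η • uz from huz), (show d * vz = (1/2:F) • vz from hvz)]
    have hBud : B ux z = B ux uz := by
      conv_lhs => rw [hzdec]
      rw [map_add, map_add, map_smul]
      have h1 : B ux d = 0 := by
        rw [hsymm ux d, hBax d hd ux]
        exact phiL_eta hg hd hux
      have h2 : B ux vz = 0 := horth d hd hux hvz
      rw [h1, h2]; simp
    have hBvd : B vx z = B vx vz := by
      conv_lhs => rw [hzdec]
      rw [map_add, map_add, map_smul]
      have h1 : B vx d = 0 := by
        rw [hsymm vx d, hBax d hd vx]
        exact phiL_half hg hd hvx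
      have h2 : B vx uz = 0 := by
        rw [hsymm vx uz]
        exact horth d hd huz hvx
      rw [h1, h2]; simp
    have hBux : B x uz = B ux uz := by
      rw [hsymm x uz]
      conv_lhs => rw [hxdec]
      rw [map_add, map_add, map_smul]
      have h1 : B uz d = 0 := by
        rw [hsymm uz d, hBax d hd uz]
        exact phiL_eta hg hd huz
      have h2 : B uz vx = 0 := horth d hd huz hvx
      rw [h1, h2]
      simp only [smul_zero, zero_add, add_zero]
      exact hsymm uz ux
    have hBvx : B x vz = B vx vz := by
      rw [hsymm x vz]
      conv_lhs => rw [hxdec]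
      rw [map_add, map_add, map_smul]
      have h1 : B vz d = 0 := by
        rw [hsymm vz d, hBax d hd vz]
        exact phiL_half hg hd hvz
      have h2 : B vz ux = 0 := by
        rw [hsymm vz ux]
        exact horth d hd hux hvz
      rw [h1, h2]
      simp only [smul_zero, zero_add, add_zero]
      exact hsymm vz vx
    have hBxd : B x d = phiFun hd x := by
      rw [hsymm x d]; exact hBax d hd x
    have hBdz : B d z = phiFun hd z := hBax d hd z
    have hL : B (x*d) z = phiFun hd x * phiFun hd z + η * B ux uz + (1/2:F) * B vx vz := by
      rw [hdx]
      simp only [map_add, map_smul, LinearMap.add_apply, LinearMap.smul_apply, smul_eq_mul]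
      rw [hBdz, hBud, hBvd]
    have hR : B x (d*z) = phiFun hd z * phiFun hd x + η * B ux uz + (1/2:F) * B vx vz := by
      rw [hdz]
      simp only [map_add, map_smul, smul_eq_mul]
      rw [hBxd, hBux, hBvx]
    rw [hL, hR]
    ring
  refine ⟨B, key, hsymm, ?_⟩
  intro x y z
  have hLeq : ((B.flip z).comp (LinearMap.mulLeft F x))
      = ((B x).comp (LinearMap.mulRight F z)) := by
    apply LinearMap.ext_on hspan
    intro d hd
    show B (x*d) z = B x (d*z)
    exact hfrobax d hd x z
  have := DFunLike.congr_fun hLeq y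
  simpa using this

end form


end PCaux

/-- a primitive `PC(η)`-axial algebra admits a unique Frobenius form with
`(a,a) = 1` on all primitive axes; moreover for this form `(a,x) = φ_a(x)` for every
primitive axis `a`. -/
theorem stmt7 (η : F) (h2 : (2 : F) ≠ 0) (hη1 : η ≠ 1) (hηh : η ≠ 1 / 2)
    (hA : IsPrimPCAxialAlgebra F A η) :
    ∃ B : A →ₗ[F] A →ₗ[F] F,
      (B ≠ 0 ∧ (∀ x y : A, B x y = B y x) ∧
        (∀ x y z : A, B (x * y) z = B x (y * z)) ∧
        (∀ a : A, IsPrimPCAxis F η a → B a a = 1)) ∧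
      (∀ a : A, IsPrimPCAxis F η a → ∀ x : A, ∀ c : F, ∀ u v : A,
        u ∈ PCeig F a η → v ∈ PCeig F a (1 / 2 : F) → x = c • a + u + v → B a x = c) ∧
      (∀ B' : A →ₗ[F] A →ₗ[F] F,
        (B' ≠ 0 ∧ (∀ x y : A, B' x y = B' y x) ∧
          (∀ x y z : A, B' (x * y) z = B' x (y * z)) ∧
          (∀ a : A, IsPrimPCAxis F η a → B' a a = 1)) → B' = B) := by
  classical
  have hg : PCaux.Good F η := ⟨h2, hη1, hηh⟩
  obtain ⟨B, key, hsymm, hfrob⟩ := PCaux.exists_form hg hA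
  have hspan := PCaux.span_axes_eq_top hg hA
  refine ⟨B, ⟨?_, hsymm, hfrob, ?_⟩, ?_, ?_⟩
  · -- B ≠ 0
    obtain ⟨X, ⟨a0, ha0⟩, hXax, -⟩ := hA
    have ha := hXax a0 ha0
    intro h0
    have h1 : B a0 a0 = 1 := by
      rw [key a0 ha]
      exact PCaux.phiL_self hg ha
    rw [h0] at h1
    simp only [LinearMap.zero_apply] at h1
    exact one_ne_zero h1.symm
  · -- B a a = 1 on primitive axes
    intro a ha
    rw [key a ha]
    exact PCaux.phiL_self hg ha
  · -- B a x = φ_a(x)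
    intro a ha x c u v hu hv hx
    rw [key a ha]
    exact PCaux.phiL_unique hg ha hu hv hx
  · -- uniqueness
    rintro B' ⟨-, hB'symm, hB'frob, hB'ax⟩
    have hB'phi : ∀ (c : A) (hc : IsPrimPCAxis F η c) (x : A),
        B' c x = PCaux.phiFun hc x := by
      intro c hc x
      obtain ⟨u, hu, v, hv, hx⟩ := PCaux.phi_spec hc x
      have hcu : B' c u = 0 := by
        have h1 : B' (c*c) u = B' c (c*u) := hB'frob c c u
        rw [hc.1.idem, (show c*u = η • u from hu), map_smul, smul_eq_mul] at h1
        have h3 : (1-η) * B' c u = 0 := by linear_combination h1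
        exact (mul_eq_zero.mp h3).resolve_left hg.one_sub_eta_ne
      have hcv : B' c v = 0 := by
        have h1 : B' (c*c) v = B' c (c*v) := hB'frob c c v
        rw [hc.1.idem, (show c*v = (1/2:F) • v from hv), map_smul, smul_eq_mul] at h1
        have h3 : (1-(1/2:F)) * B' c v = 0 := by linear_combination h1
        have hn : (1 - (1/2:F)) ≠ 0 := fun h0 => hg.half_sub_one_ne (by linear_combination -h0)
        exact (mul_eq_zero.mp h3).resolve_left hn
      have hcc : B' c c = 1 := hB'ax c hc
      conv_lhs => rw [hx]
      rw [map_add, map_add, map_smul, smul_eq_mul, hcc, mul_one, hcu, hcv,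
        add_zero, add_zero]
    apply LinearMap.ext_on hspan
    intro c hc
    apply LinearMap.ext_on hspan
    intro e he
    show B' c e = B c e
    rw [key c hc]
    exact hB'phi c hc e
end

section
/- Let η ≠ -1 and let A be a primitive PC(η)-axial algebra. If a and b are primitive axes of A, then φ_a(b) = 1; equivalently, (a,b) = 1 for the Frobenius form normalized by (a,a) = 1 on primitive axes. -/
/-!
Write `b = α • a + u + v` with `u ∈ A_η(a)` and `v ∈ A_{1/2}(a)`. Idempotence of `b` and the
fusion law at the primitive axis `a` express all products of `a`, `u`, `v` through `α` and the
scalar `p` with `u * u = p • a`, so `span {a, u, v}` is invariant under multiplication by `b`.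
Since `A_1(b) = F b`, the operator `(ad b - η)(ad b - 1/2)` maps `A` into `F b`; applied to `a` it
gives `b(ba) - (η + 1/2) ba + (η/2) a = c b`. When `u, v ≠ 0`, the components of this identity in
`A_η(a)` and `A_{1/2}(a)` force `(α - 1)(1 - 2η)(1 + η) = 0`; the cases `u = 0` or `v = 0` are
settled by the remaining components and products.
-/

open Submodule

variable {F : Type*} [Field F] {A : Type*} [NonUnitalNonAssocCommRing A]
  [Module F A] [SMulCommClass F A A] [IsScalarTower F A A]

set_option linter.unusedSectionVars false

theorem one_ne_half (h2 : (2 : F) ≠ 0) : (1 : F) ≠ 1 / 2 := by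
  rw [ne_eq, eq_div_iff h2, one_mul]
  exact fun h => one_ne_zero (by linear_combination h)

namespace PCeig

variable {a x y z : A} {l m n : F}

theorem eq_zero_of_add_eq_zero (hlm : l ≠ m) (hx : x ∈ PCeig F a l) (hy : y ∈ PCeig F a m)
    (h : x + y = 0) : x = 0 := by
  have hy' : a * y = m • y := hy
  rw [eq_neg_of_add_eq_zero_right h, mul_neg, smul_neg, neg_inj,
    show a * x = l • x from hx] at hy'
  have hlmx : (l - m) • x = 0 := by rw [sub_smul, hy', sub_self]
  exact (smul_eq_zero.1 hlmx).resolve_left (sub_ne_zero.2 hlm)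

theorem eq_zero_of_add_add_eq_zero (hlm : l ≠ m) (hln : l ≠ n) (hmn : m ≠ n)
    (hx : x ∈ PCeig F a l) (hy : y ∈ PCeig F a m) (hz : z ∈ PCeig F a n) (h : x + y + z = 0) :
    x = 0 ∧ y = 0 ∧ z = 0 := by
  have hxy : (l - n) • x + (m - n) • y = 0 := by
    have h' := congrArg (fun w => a * w - n • w) h
    simp only [mul_add, show a * x = l • x from hx, show a * y = m • y from hy,
      show a * z = n • z from hz, mul_zero, smul_zero, sub_zero] at h'
    linear_combination (norm := module) h'
  obtain rfl : x = 0 := (smul_eq_zero.1 (eq_zero_of_add_eq_zero hlm (smul_mem _ _ hx)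
    (smul_mem _ _ hy) hxy)).resolve_left (sub_ne_zero.2 hln)
  rw [zero_add] at h
  obtain rfl : y = 0 := eq_zero_of_add_eq_zero hmn hy hz h
  exact ⟨rfl, rfl, by rwa [zero_add] at h⟩

theorem mul_mul_sub_eq_smul (η : F) (hx : x ∈ PCeig F a l) :
    a * (a * x) - (η + 1 / 2) • (a * x) + (η / 2) • x = ((l - η) * (l - 1 / 2)) • x := by
  rw [show a * x = l • x from hx, mul_smul_comm, show a * x = l • x from hx]
  module

end PCeig

variable {η α p c : F} {a b u v : A}

theorem IsPCAxis.mem_one (ha : IsPCAxis F η a) : a ∈ PCeig F a 1 :=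
  show a * a = (1 : F) • a by rw [one_smul, ha.idem]

theorem IsPCAxis.mul_mul_sub_mem_one (hb : IsPCAxis F η b) (x : A) :
    b * (b * x) - (η + 1 / 2) • (b * x) + (η / 2) • x ∈ PCeig F b 1 := by
  let f : A →ₗ[F] A :=
    LinearMap.mulLeft F b ∘ₗ LinearMap.mulLeft F b - (η + 1 / 2) • LinearMap.mulLeft F b
      + (η / 2) • LinearMap.id
  suffices ⊤ ≤ (PCeig F b 1).comap f from this (mem_top (x := x))
  rw [← hb.decomp]
  refine sup_le (sup_le ?_ ?_) ?_ <;> intro y hy <;>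
    rw [mem_comap, show f y = _ from PCeig.mul_mul_sub_eq_smul η hy]
  · exact smul_mem _ _ hy
  · simp
  · simp

theorem IsPrimPCAxis.exists_mul_mul_sub_eq_smul (hb : IsPrimPCAxis F η b) (x : A) :
    ∃ c : F, b * (b * x) - (η + 1 / 2) • (b * x) + (η / 2) • x = c • b := by
  have h := hb.1.mul_mul_sub_mem_one x
  rw [hb.2.2, mem_span_singleton] at h
  exact h.imp fun _ => Eq.symm

theorem IsPrimPCAxis.exists_mul_eq_of_isIdempotentElem (ha : IsPrimPCAxis F η a)
    (h2 : (2 : F) ≠ 0) (hη1 : η ≠ 1) (hηh : η ≠ 1 / 2) (hu : u ∈ PCeig F a η)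
    (hv : v ∈ PCeig F a (1 / 2)) (hb : IsIdempotentElem (α • a + u + v)) :
    ∃ p : F, u * u = p • a ∧ v * v = (α - α ^ 2 - p) • a + (1 - 2 * α * η) • u ∧
      u * v = ((1 - α) / 2) • v := by
  obtain ⟨p, hp⟩ := mem_span_singleton.1 (ha.2.2 ▸ ha.1.fusee u hu u hu)
  obtain ⟨y, hy, w, hw, hvv⟩ := mem_sup.1 (ha.1.fushh v hv v hv)
  obtain ⟨q, rfl⟩ := mem_span_singleton.1 (ha.2.2 ▸ hy)
  have hsum : (α ^ 2 + p + q - α) • a + ((2 * α * η - 1) • u + w)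
      + ((α - 1) • v + (2 : F) • (u * v)) = 0 := by
    have hb' : (α • a + u + v) * (α • a + u + v) = α • a + u + v := hb
    simp only [mul_add, add_mul, smul_mul_assoc, mul_smul_comm, ha.1.idem, mul_comm u a,
      mul_comm v a, mul_comm v u, show a * u = η • u from hu,
      show a * v = (1 / 2 : F) • v from hv, ← hp, ← hvv] at hb'
    linear_combination (norm := skip) hb'
    match_scalars <;> field_simp <;> ring
  obtain ⟨ha0, hu0, hv0⟩ := PCeig.eq_zero_of_add_add_eq_zero hη1.symm (one_ne_half h2) hηh
    (smul_mem _ _ ha.1.mem_one) (add_mem (smul_mem _ _ hu) hw)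
    (add_mem (smul_mem _ _ hv) (smul_mem _ _ (ha.1.fuseh u hu v hv))) hsum
  have hq : q = α - α ^ 2 - p := by
    linear_combination (smul_eq_zero.1 ha0).resolve_right ha.2.1
  refine ⟨p, hp.symm, ?_, ?_⟩
  · rw [← hvv, hq, eq_neg_of_add_eq_zero_right hu0]
    module
  · linear_combination (norm := skip) (1 / 2 : F) • hv0
    match_scalars <;> field_simp <;> ring

-- Twice the components of `hc` along `A_1(a)`, `A_η(a)`, `A_{1/2}(a)`.
theorem IsPrimPCAxis.components_of_mul_mul_sub_eq_smul (ha : IsPrimPCAxis F η a)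
    (h2 : (2 : F) ≠ 0) (hη1 : η ≠ 1) (hηh : η ≠ 1 / 2) (hu : u ∈ PCeig F a η)
    (hv : v ∈ PCeig F a (1 / 2)) (hu2 : u * u = p • a)
    (hv2 : v * v = (α - α ^ 2 - p) • a + (1 - 2 * α * η) • u) (huv : u * v = ((1 - α) / 2) • v)
    (hc : (α • a + u + v) * ((α • a + u + v) * a) - (η + 1 / 2) • ((α • a + u + v) * a)
      + (η / 2) • a = c • (α • a + u + v)) :
    α ^ 2 + 2 * η * p - p - 2 * α * η + η = 2 * c * α ∧
      (u = 0 ∨ 2 * α * η ^ 2 + 1 - 2 * η ^ 2 - η = 2 * c) ∧ (v = 0 ∨ α * (1 - η) = 2 * c) := by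
  have hau : a * u = η • u := hu
  have hav : a * v = (1 / 2 : F) • v := hv
  have hba : (α • a + u + v) * a = α • a + η • u + (1 / 2 : F) • v := by
    rw [add_mul, add_mul, smul_mul_assoc, ha.1.idem, mul_comm u, mul_comm v, hau, hav]
  have hbu : (α • a + u + v) * u = p • a + (α * η) • u + ((1 - α) / 2) • v := by
    rw [add_mul, add_mul, smul_mul_assoc, hau, hu2, mul_comm v, huv]
    module
  have hbv : (α • a + u + v) * v
      = (α - α ^ 2 - p) • a + (1 - 2 * α * η) • u + (1 / 2 : F) • v := by
    rw [add_mul, add_mul, smul_mul_assoc, hav, huv, hv2]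
    match_scalars <;> field_simp; ring
  rw [hba, mul_add, mul_add, mul_smul_comm, mul_smul_comm, mul_smul_comm, hba, hbu, hbv] at hc
  have hsum : (α ^ 2 + 2 * η * p - p - 2 * α * η + η - 2 * c * α) • a
      + (2 * α * η ^ 2 + 1 - 2 * η ^ 2 - η - 2 * c) • u + (α * (1 - η) - 2 * c) • v = 0 := by
    linear_combination (norm := skip) (2 : F) • hc
    match_scalars <;> field_simp <;> ring
  obtain ⟨ha0, hu0, hv0⟩ := PCeig.eq_zero_of_add_add_eq_zero hη1.symm (one_ne_half h2) hηh
    (smul_mem _ _ ha.1.mem_one) (smul_mem _ _ hu) (smul_mem _ _ hv) hsum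
  refine ⟨?_, ?_, ?_⟩
  · linear_combination (smul_eq_zero.1 ha0).resolve_right ha.2.1
  · exact (smul_eq_zero.1 hu0).symm.imp_right sub_eq_zero.1
  · exact (smul_eq_zero.1 hv0).symm.imp_right sub_eq_zero.1

theorem eq_one_of_eta_half_components (h2η : 2 * η ≠ 1) (hηm : η ≠ -1)
    (hu : 2 * α * η ^ 2 + 1 - 2 * η ^ 2 - η = 2 * c) (hv : α * (1 - η) = 2 * c) : α = 1 := by
  have h : (α - 1) * ((1 - 2 * η) * (1 + η)) = 0 := by linear_combination hv - hu
  rcases mul_eq_zero.1 h with h | h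
  · exact sub_eq_zero.1 h
  rcases mul_eq_zero.1 h with h | h
  · exact absurd (by linear_combination -h) h2η
  · exact absurd (by linear_combination h) hηm

theorem eq_one_of_one_eta_components (h2 : (2 : F) ≠ 0) (h2η : 2 * η ≠ 1) (hηm : η ≠ -1)
    (ha : α ^ 2 + 2 * η * p - p - 2 * α * η + η = 2 * c * α)
    (hu : 2 * α * η ^ 2 + 1 - 2 * η ^ 2 - η = 2 * c) (hp : α - α ^ 2 - p = 0)
    (hαη : 1 - 2 * α * η = 0) : α = 1 := by
  have h : 2 * ((α - 1) * (α * (1 - η) - η)) = 0 := by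
    linear_combination ha - α * hu + (2 * η - 1) * hp + η * (1 - α) * hαη
  rcases mul_eq_zero.1 ((mul_eq_zero.1 h).resolve_left h2) with h | h
  · exact sub_eq_zero.1 h
  have h' : (2 * η - 1) * (η + 1) = 0 := by linear_combination -2 * η * h - (1 - η) * hαη
  rcases mul_eq_zero.1 h' with h' | h'
  · exact absurd (by linear_combination h') h2η
  · exact absurd (by linear_combination h') hηm

theorem eq_one_of_isIdempotentElem_smul (ha : IsIdempotentElem a) (ha0 : a ≠ 0)
    (hαa : IsIdempotentElem (α • a)) (hαa0 : α • a ≠ 0) : α = 1 := by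
  have h : (α * (α - 1)) • a = 0 := by
    have h' : (α • a) * (α • a) = α • a := hαa
    rw [smul_mul_smul_comm, ha.eq] at h'
    rw [mul_sub, mul_one, sub_smul, h', sub_self]
  rcases mul_eq_zero.1 ((smul_eq_zero.1 h).resolve_right ha0) with h | h
  · exact absurd (by rw [h, zero_smul]) hαa0
  · exact sub_eq_zero.1 h

theorem stmt8_general (η : F) (h2 : (2 : F) ≠ 0) (hη1 : η ≠ 1) (hηh : η ≠ 1 / 2) (hηm : η ≠ -1)
    (a b : A) (ha : IsPrimPCAxis F η a) (hb : IsPrimPCAxis F η b)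
    (α : F) (u v : A)
    (hu : u ∈ PCeig F a η) (hv : v ∈ PCeig F a (1 / 2 : F))
    (hbd : b = α • a + u + v) :
    α = 1 := by
  subst hbd
  have h2η : 2 * η ≠ 1 := fun h => hηh (by rw [eq_div_iff h2]; linear_combination h)
  obtain ⟨p, hu2, hv2, huv⟩ := ha.exists_mul_eq_of_isIdempotentElem h2 hη1 hηh hu hv hb.1.idem
  obtain ⟨c, hc⟩ := hb.exists_mul_mul_sub_eq_smul a
  obtain ⟨hEa, hEu, hEv⟩ :=
    ha.components_of_mul_mul_sub_eq_smul h2 hη1 hηh hu hv hu2 hv2 huv hc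
  rcases eq_or_ne v 0 with rfl | hv0
  · rcases eq_or_ne u 0 with rfl | hu0
    · simp only [add_zero] at hb
      exact eq_one_of_isIdempotentElem_smul ha.1.idem ha.2.1 hb.1.idem hb.2.1
    obtain ⟨hP, hQ, -⟩ := PCeig.eq_zero_of_add_add_eq_zero hη1.symm (one_ne_half h2) hηh
      (smul_mem _ _ ha.1.mem_one) (smul_mem _ _ hu) (zero_mem _)
      (by rw [add_zero, ← hv2, mul_zero])
    exact eq_one_of_one_eta_components h2 h2η hηm hEa (hEu.resolve_left hu0)
      ((smul_eq_zero.1 hP).resolve_right ha.2.1) ((smul_eq_zero.1 hQ).resolve_right hu0)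
  rcases hEu with rfl | hEu
  · rw [zero_mul, eq_comm, smul_eq_zero, div_eq_zero_iff, sub_eq_zero] at huv
    exact ((huv.resolve_right hv0).resolve_right h2).symm
  exact eq_one_of_eta_half_components h2η hηm hEu (hEv.resolve_left hv0)

/-- if `η ≠ -1`, then for any two primitive axes `a`, `b` of a primitive
`PC(η)`-axial algebra, `φ_a(b) = 1`. -/
theorem stmt8 (η : F) (h2 : (2 : F) ≠ 0) (hη1 : η ≠ 1) (hηh : η ≠ 1 / 2) (hηm : η ≠ -1)
    (hA : IsPrimPCAxialAlgebra F A η)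
    (a b : A) (ha : IsPrimPCAxis F η a) (hb : IsPrimPCAxis F η b)
    (α : F) (u v : A)
    (hu : u ∈ PCeig F a η) (hv : v ∈ PCeig F a (1 / 2 : F))
    (hbd : b = α • a + u + v) :
    α = 1 :=
  stmt8_general η h2 hη1 hηh hηm a b ha hb α u v hu hv hbd
end

section
/- Let η ≠ -1, let A be a primitive PC(η)-axial algebra, and let (·,·) be the unique Frobenius form on A with (a,a) = 1 for all primitive axes a. For a primitive axis a define w_a : A → F by w_a(x) = (a,x). Then w_a is a (nonzero) F-algebra homomorphism; moreover w_a = w_b for all primitive axes a, b, and (x,y) = w_a(xy) for all x, y ∈ A. In particular, A is a baric algebra. -/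
open Submodule

variable {F : Type*} [Field F] {A : Type*} [NonUnitalNonAssocCommRing A]
  [Module F A] [SMulCommClass F A A] [IsScalarTower F A A]

/-! ### Auxiliary lemmas -/

section PC9Aux

variable {η : F}

lemma pc_self_mem {b : A} (hb : b * b = b) : b ∈ PCeig F b 1 := by
  show b * b = (1:F) • b
  rw [hb, one_smul]

/-- Orthogonality of distinct eigenspaces w.r.t. a Frobenius form. -/
lemma pc_orth (B : A →ₗ[F] A →ₗ[F] F)
    (hBsymm : ∀ x y : A, B x y = B y x)
    (hBfrob : ∀ x y z : A, B (x * y) z = B x (y * z))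
    {b x y : A} {lam mu : F} (hne : lam ≠ mu)
    (hx : x ∈ PCeig F b lam) (hy : y ∈ PCeig F b mu) : B x y = 0 := by
  have hx' : b * x = lam • x := hx
  have hy' : b * y = mu • y := hy
  have h1 : B (b * x) y = B b (x * y) := hBfrob b x y
  have h2 : B (b * y) x = B b (y * x) := hBfrob b y x
  rw [hx', map_smul, LinearMap.smul_apply, smul_eq_mul] at h1
  rw [hy', map_smul, LinearMap.smul_apply, smul_eq_mul] at h2
  rw [mul_comm y x] at h2
  have h4 : B y x = B x y := hBsymm y x
  rw [h4] at h2
  have h3 : (lam - mu) * B x y = 0 := by linear_combination h1 - h2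
  rcases mul_eq_zero.mp h3 with h | h
  · exact absurd (sub_eq_zero.mp h) hne
  · exact h

lemma pc_decomp {b : A} (hb : IsPCAxis F η b) (y : A) :
    ∃ u ∈ PCeig F b 1, ∃ v ∈ PCeig F b η, ∃ w ∈ PCeig F b (1/2 : F), y = u + v + w := by
  have hy : y ∈ PCeig F b 1 ⊔ PCeig F b η ⊔ PCeig F b (1/2 : F) := by
    rw [hb.decomp]; trivial
  rcases Submodule.mem_sup.mp hy with ⟨uv, huv, w, hw, hywu⟩
  rcases Submodule.mem_sup.mp huv with ⟨u, hu, v, hv, huvv⟩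
  exact ⟨u, hu, v, hv, w, hw, by rw [← hywu, ← huvv]⟩

lemma pc_indep2 {b : A} {lam mu : F} (hne : lam ≠ mu) {u v : A}
    (hu : u ∈ PCeig F b lam) (hv : v ∈ PCeig F b mu) (hsum : u + v = 0) :
    u = 0 ∧ v = 0 := by
  have hu' : b * u = lam • u := hu
  have hv' : b * v = mu • v := hv
  have h1 : lam • u + mu • v = 0 := by
    rw [← hu', ← hv', ← mul_add, hsum, mul_zero]
  have h2 : lam • u + lam • v = 0 := by
    rw [← smul_add, hsum, smul_zero]
  have h3 : (mu - lam) • v = 0 := by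
    calc (mu - lam) • v = (lam • u + mu • v) - (lam • u + lam • v) := by
          rw [sub_smul]; abel
      _ = 0 := by rw [h1, h2, sub_zero]
  have hv0 : v = 0 := by
    rcases smul_eq_zero.mp h3 with h | h
    · exact absurd (sub_eq_zero.mp h) (Ne.symm hne)
    · exact h
  refine ⟨?_, hv0⟩
  rw [hv0, add_zero] at hsum
  exact hsum

lemma pc_indep3 (h2 : (2:F) ≠ 0) (hη1 : η ≠ 1) (hηh : η ≠ 1/2) {b : A} {u v w : A}
    (hu : u ∈ PCeig F b 1) (hv : v ∈ PCeig F b η) (hw : w ∈ PCeig F b (1/2 : F))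
    (hsum : u + v + w = 0) : u = 0 ∧ v = 0 ∧ w = 0 := by
  have h21 : (2:F) * (1/2) = 1 := by rw [mul_one_div, div_self h2]
  have hu' : b * u = (1:F) • u := hu
  have hv' : b * v = η • v := hv
  have hw' : b * w = (1/2 : F) • w := hw
  have hmul : (1:F) • u + η • v + (1/2 : F) • w = 0 := by
    rw [← hu', ← hv', ← hw', ← mul_add, ← mul_add, hsum, mul_zero]
  have hhalf : (1/2 : F) • u + (1/2 : F) • v + (1/2 : F) • w = 0 := by
    rw [← smul_add, ← smul_add, hsum, smul_zero]
  have hkey : ((1:F) - 1/2) • u + (η - 1/2) • v = 0 := by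
    rw [sub_smul, sub_smul]
    calc (1:F) • u - (1/2:F) • u + (η • v - (1/2:F) • v)
        = ((1:F) • u + η • v + (1/2:F) • w) - ((1/2:F) • u + (1/2:F) • v + (1/2:F) • w) := by
          abel
      _ = 0 := by rw [hmul, hhalf, sub_zero]
  have hscaled := pc_indep2 (show (1:F) ≠ η from Ne.symm hη1)
    (Submodule.smul_mem _ _ hu) (Submodule.smul_mem _ _ hv) hkey
  have h1h : ((1:F) - 1/2) ≠ 0 := by
    intro h
    apply one_ne_zero (α := F)
    linear_combination (2:F) * h + h21
  have hu0 : u = 0 := by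
    rcases smul_eq_zero.mp hscaled.1 with h | h
    · exact absurd h h1h
    · exact h
  have hv0 : v = 0 := by
    rcases smul_eq_zero.mp hscaled.2 with h | h
    · exact absurd h (sub_ne_zero.mpr hηh)
    · exact h
  refine ⟨hu0, hv0, ?_⟩
  rw [hu0, hv0, zero_add, zero_add] at hsum
  exact hsum

end PC9Aux
set_option linter.unusedSectionVars false

section PC9Miy

variable {F : Type*} [Field F] {A : Type*} [NonUnitalNonAssocCommRing A]
  [Module F A] [SMulCommClass F A A] [IsScalarTower F A A]

variable {η : F}

/-- The Miyamoto involution attached to a decomposition `A = E ⊕ O`. -/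
noncomputable def miy (E O : Submodule F A) (hc : IsCompl E O) : A →ₗ[F] A :=
  (2:F) • (E.subtype.comp (E.linearProjOfIsCompl O hc)) - LinearMap.id

variable {E O : Submodule F A}

lemma miy_even (hc : IsCompl E O) {y : A} (hy : y ∈ E) : miy E O hc y = y := by
  have h : E.linearProjOfIsCompl O hc y = ⟨y, hy⟩ := by
    exact Submodule.linearProjOfIsCompl_apply_left hc ⟨y, hy⟩
  simp only [miy, LinearMap.sub_apply, LinearMap.smul_apply, LinearMap.coe_comp,
    Function.comp_apply, Submodule.coe_subtype, LinearMap.id_apply, h]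
  rw [two_smul]; abel

lemma miy_odd (hc : IsCompl E O) {y : A} (hy : y ∈ O) : miy E O hc y = -y := by
  have h : E.linearProjOfIsCompl O hc y = 0 :=
    Submodule.linearProjOfIsCompl_apply_right' hc hy
  simp only [miy, LinearMap.sub_apply, LinearMap.smul_apply, LinearMap.coe_comp,
    Function.comp_apply, Submodule.coe_subtype, LinearMap.id_apply, h,
    ZeroMemClass.coe_zero, smul_zero, zero_sub]

lemma miy_decomp (hc : IsCompl E O) {p m : A} (hp : p ∈ E) (hm : m ∈ O) :
    miy E O hc (p + m) = p - m := by
  rw [map_add, miy_even hc hp, miy_odd hc hm, sub_eq_add_neg]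

lemma pc_exists_EO (hc : IsCompl E O) (y : A) : ∃ p ∈ E, ∃ m ∈ O, y = p + m := by
  have hy : y ∈ E ⊔ O := by rw [hc.codisjoint.eq_top]; trivial
  rcases Submodule.mem_sup.mp hy with ⟨p, hp, m, hm, h⟩
  exact ⟨p, hp, m, hm, h.symm⟩

lemma miy_invol (hc : IsCompl E O) (y : A) : miy E O hc (miy E O hc y) = y := by
  obtain ⟨p, hp, m, hm, rfl⟩ := pc_exists_EO hc y
  rw [miy_decomp hc hp hm, sub_eq_add_neg, miy_decomp hc hp (neg_mem hm), sub_neg_eq_add]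

lemma miy_mul (hc : IsCompl E O)
    (hEE : ∀ x ∈ E, ∀ y ∈ E, x * y ∈ E) (hEO : ∀ x ∈ E, ∀ y ∈ O, x * y ∈ O)
    (hOO : ∀ x ∈ O, ∀ y ∈ O, x * y ∈ E) (y z : A) :
    miy E O hc (y * z) = miy E O hc y * miy E O hc z := by
  obtain ⟨p, hp, m, hm, rfl⟩ := pc_exists_EO hc y
  obtain ⟨q, hq, n, hn, rfl⟩ := pc_exists_EO hc z
  have h1 : (p + m) * (q + n) = (p * q + m * n) + (p * n + m * q) := by
    rw [mul_add, add_mul, add_mul]; abel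
  have hmq : m * q ∈ O := by rw [mul_comm]; exact hEO q hq m hm
  rw [h1, miy_decomp hc (add_mem (hEE p hp q hq) (hOO m hm n hn))
      (add_mem (hEO p hp n hn) hmq), miy_decomp hc hp hm, miy_decomp hc hq hn]
  rw [sub_mul, mul_sub, mul_sub]; abel

/-- The even/odd decomposition attached to an axis is complementary. -/
lemma pc_compl (h2 : (2:F) ≠ 0) (hη1 : η ≠ 1) (hηh : η ≠ 1/2) {b : A}
    (hb : IsPCAxis F η b) :
    IsCompl (PCeig F b 1 ⊔ PCeig F b η) (PCeig F b (1/2 : F)) := by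
  constructor
  · rw [Submodule.disjoint_def]
    intro x hxE hxO
    rcases Submodule.mem_sup.mp hxE with ⟨u, hu, v, hv, rfl⟩
    have h3 := pc_indep3 h2 hη1 hηh hu hv (neg_mem hxO) (add_neg_cancel _)
    rw [h3.1, h3.2.1, add_zero]
  · rw [codisjoint_iff]
    exact hb.decomp

lemma pc_EE {b : A} (hb : IsPCAxis F η b) :
    ∀ x ∈ PCeig F b 1 ⊔ PCeig F b η, ∀ y ∈ PCeig F b 1 ⊔ PCeig F b η,
      x * y ∈ PCeig F b 1 ⊔ PCeig F b η := by
  intro x hx y hy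
  rcases Submodule.mem_sup.mp hx with ⟨u, hu, v, hv, rfl⟩
  rcases Submodule.mem_sup.mp hy with ⟨p, hp, q, hq, rfl⟩
  have h1 : (u + v) * (p + q) = u * p + u * q + (v * p + v * q) := by
    rw [mul_add, add_mul, add_mul]; abel
  rw [h1]
  have hvp : v * p ∈ PCeig F b η := by rw [mul_comm]; exact hb.fus1e p hp v hv
  exact add_mem (add_mem (Submodule.mem_sup_left (hb.fus11 u hu p hp))
    (Submodule.mem_sup_right (hb.fus1e u hu q hq)))
    (add_mem (Submodule.mem_sup_right hvp) (Submodule.mem_sup_left (hb.fusee v hv q hq)))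

lemma pc_EO {b : A} (hb : IsPCAxis F η b) :
    ∀ x ∈ PCeig F b 1 ⊔ PCeig F b η, ∀ y ∈ PCeig F b (1/2 : F),
      x * y ∈ PCeig F b (1/2 : F) := by
  intro x hx y hy
  rcases Submodule.mem_sup.mp hx with ⟨u, hu, v, hv, rfl⟩
  rw [add_mul]
  exact add_mem (hb.fus1h u hu y hy) (hb.fuseh v hv y hy)

lemma pc_sigma_eig {c : A} (σ : A →ₗ[F] A) (hσinv : ∀ y, σ (σ y) = y)
    (hσmul : ∀ y z : A, σ (y * z) = σ y * σ z) (lam : F) :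
    (PCeig F c lam).map σ = PCeig F (σ c) lam := by
  ext x
  simp only [Submodule.mem_map]
  constructor
  · rintro ⟨y, hy, rfl⟩
    show σ c * σ y = lam • σ y
    have hy' : c * y = lam • y := hy
    rw [← hσmul c y, hy', map_smul]
  · intro hx
    refine ⟨σ x, ?_, hσinv x⟩
    show c * σ x = lam • σ x
    have hx' : σ c * x = lam • x := hx
    have h := congrArg σ hx'
    rw [map_smul, hσmul, hσinv] at h
    exact h

lemma pc_sigma_axis {c : A} (σ : A →ₗ[F] A) (hσinv : ∀ y, σ (σ y) = y)
    (hσmul : ∀ y z : A, σ (y * z) = σ y * σ z) (hc : IsPrimPCAxis F η c) :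
    IsPrimPCAxis F η (σ c) := by
  obtain ⟨hcA, hc0, hc1⟩ := hc
  have hsurj : Function.Surjective σ := fun y => ⟨σ y, hσinv y⟩
  refine ⟨⟨?_, ?_, ?_, ?_, ?_, ?_, ?_, ?_⟩, ?_, ?_⟩
  · rw [← hσmul, hcA.idem]
  · rw [← pc_sigma_eig σ hσinv hσmul 1, ← pc_sigma_eig σ hσinv hσmul η,
      ← pc_sigma_eig σ hσinv hσmul (1/2 : F), ← Submodule.map_sup, ← Submodule.map_sup,
      hcA.decomp, Submodule.map_top]
    exact LinearMap.range_eq_top.mpr hsurj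
  · intro x hx y hy
    rw [← pc_sigma_eig σ hσinv hσmul] at hx hy ⊢
    obtain ⟨u, hu, rfl⟩ := hx
    obtain ⟨v, hv, rfl⟩ := hy
    exact Submodule.mem_map.mpr ⟨u * v, hcA.fus11 u hu v hv, hσmul u v⟩
  · intro x hx y hy
    rw [← pc_sigma_eig σ hσinv hσmul] at hx hy ⊢
    obtain ⟨u, hu, rfl⟩ := hx
    obtain ⟨v, hv, rfl⟩ := hy
    exact Submodule.mem_map.mpr ⟨u * v, hcA.fus1e u hu v hv, hσmul u v⟩
  · intro x hx y hy
    rw [← pc_sigma_eig σ hσinv hσmul] at hx hy ⊢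
    obtain ⟨u, hu, rfl⟩ := hx
    obtain ⟨v, hv, rfl⟩ := hy
    exact Submodule.mem_map.mpr ⟨u * v, hcA.fus1h u hu v hv, hσmul u v⟩
  · intro x hx y hy
    rw [← pc_sigma_eig σ hσinv hσmul] at hx hy ⊢
    obtain ⟨u, hu, rfl⟩ := hx
    obtain ⟨v, hv, rfl⟩ := hy
    exact Submodule.mem_map.mpr ⟨u * v, hcA.fusee u hu v hv, hσmul u v⟩
  · intro x hx y hy
    rw [← pc_sigma_eig σ hσinv hσmul] at hx hy ⊢
    obtain ⟨u, hu, rfl⟩ := hx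
    obtain ⟨v, hv, rfl⟩ := hy
    exact Submodule.mem_map.mpr ⟨u * v, hcA.fuseh u hu v hv, hσmul u v⟩
  · intro x hx y hy
    rw [← pc_sigma_eig σ hσinv hσmul] at hx hy
    obtain ⟨u, hu, rfl⟩ := hx
    obtain ⟨v, hv, rfl⟩ := hy
    rw [← pc_sigma_eig σ hσinv hσmul 1, ← pc_sigma_eig σ hσinv hσmul η, ← Submodule.map_sup]
    exact Submodule.mem_map.mpr ⟨u * v, hcA.fushh u hu v hv, hσmul u v⟩
  · intro h
    apply hc0
    have h' := hσinv c
    rw [h, map_zero] at h'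
    exact h'.symm
  · rw [← pc_sigma_eig σ hσinv hσmul 1, hc1, Submodule.map_span, Set.image_singleton]

end PC9Miy
section PC9Pair

variable {F : Type*} [Field F] {A : Type*} [NonUnitalNonAssocCommRing A]
  [Module F A] [SMulCommClass F A A] [IsScalarTower F A A]

variable {η : F}

/-- Any two primitive axes pair to `1` under the normalized Frobenius form. -/
lemma pc_pair (h2 : (2:F) ≠ 0) (hη1 : η ≠ 1) (hηh : η ≠ 1/2) (hηm : η ≠ -1)
    (B : A →ₗ[F] A →ₗ[F] F)
    (hBsymm : ∀ x y : A, B x y = B y x)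
    (hBfrob : ∀ x y z : A, B (x * y) z = B x (y * z))
    (hBnorm : ∀ a : A, IsPrimPCAxis F η a → B a a = 1)
    {b c : A} (hb : IsPrimPCAxis F η b) (hc : IsPrimPCAxis F η c) :
    B b c = 1 := by
  obtain ⟨hbA, hb0, hb1⟩ := hb
  have h21 : (2:F) * (1/2) = 1 := by rw [mul_one_div, div_self h2]
  have h1η : (1:F) ≠ η := Ne.symm hη1
  have h1h : (1:F) ≠ 1/2 := by
    intro h
    apply one_ne_zero (α := F)
    linear_combination (2:F) * h + h21
  obtain ⟨u, hu, v, hv, w, hw, hceq0⟩ := pc_decomp hbA c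
  rw [hb1] at hu
  obtain ⟨α, hα⟩ := Submodule.mem_span_singleton.mp hu
  have hceq : c = α • b + v + w := by rw [hceq0, hα]
  have hbv : b * v = η • v := hv
  have hbw : b * w = (1/2:F) • w := hw
  have hbb : b * b = b := hbA.idem
  have hbm : b ∈ PCeig F b 1 := pc_self_mem hbb
  -- B-values
  have hBbb : B b b = 1 := hBnorm b ⟨hbA, hb0, hb1⟩
  have hBbv : B b v = 0 := pc_orth B hBsymm hBfrob h1η hbm hv
  have hBbw : B b w = 0 := pc_orth B hBsymm hBfrob h1h hbm hw
  have hBvw : B v w = 0 := pc_orth B hBsymm hBfrob hηh hv hw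
  have hBvb : B v b = 0 := by rw [hBsymm]; exact hBbv
  have hBwb : B w b = 0 := by rw [hBsymm]; exact hBbw
  have hBwv : B w v = 0 := by rw [hBsymm]; exact hBvw
  -- v * v
  have hvvmem : v * v ∈ PCeig F b 1 := hbA.fusee v hv v hv
  rw [hb1] at hvvmem
  obtain ⟨γ, hγ⟩ := Submodule.mem_span_singleton.mp hvvmem
  have hγval : γ = η * B v v := by
    have e1 : B b (v * v) = η * B v v := by
      rw [← hBfrob b v v, hbv, map_smul, LinearMap.smul_apply, smul_eq_mul]
    rw [← hγ, map_smul, smul_eq_mul, hBbb, mul_one] at e1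
    exact e1
  -- w * w
  have hwwmem : w * w ∈ PCeig F b 1 ⊔ PCeig F b η := hbA.fushh w hw w hw
  obtain ⟨pp, hpp, g, hg, hwweq⟩ := Submodule.mem_sup.mp hwwmem
  rw [hb1] at hpp
  obtain ⟨δ, hδ⟩ := Submodule.mem_span_singleton.mp hpp
  have hww : w * w = δ • b + g := by rw [← hwweq, hδ]
  have hBbg : B b g = 0 := pc_orth B hBsymm hBfrob h1η hbm hg
  have hδval : δ = (1/2) * B w w := by
    have e1 : B b (w * w) = (1/2) * B w w := by
      rw [← hBfrob b w w, hbw, map_smul, LinearMap.smul_apply, smul_eq_mul]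
    rw [hww, map_add, map_smul, smul_eq_mul, hBbb, mul_one, hBbg, add_zero] at e1
    exact e1
  -- v * w
  have hvwmem : v * w ∈ PCeig F b (1/2 : F) := hbA.fuseh v hv w hw
  -- expansion of c * c
  have p1 : (α • b) * (α • b) = (α*α) • b := by
    rw [smul_mul_assoc, mul_smul_comm, hbb, smul_smul]
  have p2 : (α • b) * v = (α*η) • v := by rw [smul_mul_assoc, hbv, smul_smul]
  have p3 : (α • b) * w = (α*(1/2)) • w := by rw [smul_mul_assoc, hbw, smul_smul]
  have p4 : v * (α • b) = (α*η) • v := by rw [mul_comm]; exact p2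
  have p5 : w * (α • b) = (α*(1/2)) • w := by rw [mul_comm]; exact p3
  have p6 : v * v = γ • b := hγ.symm
  have p8 : w * v = v * w := mul_comm w v
  have hexp : c * c = (α*α) • b + γ • b + (δ • b + g)
      + ((α*η) • v + (α*η) • v) + ((α*(1/2)) • w + (α*(1/2)) • w) + (v*w + v*w) := by
    conv_lhs => rw [hceq]
    simp only [mul_add, add_mul]
    rw [p1, p2, p3, p4, p5, p6, p8, hww]
    abel
  have hc2 : c * c = c := hc.1.idem
  have hX : (α*α + γ + δ - α) • b + ((α*η + α*η - 1) • v + g)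
      + ((α*(1/2) + α*(1/2) - 1) • w + (v*w + v*w)) = 0 := by
    have h0 : c * c - c = 0 := by rw [hc2, sub_self]
    rw [hexp] at h0
    nth_rewrite 1 [hceq] at h0
    calc (α*α + γ + δ - α) • b + ((α*η + α*η - 1) • v + g)
        + ((α*(1/2) + α*(1/2) - 1) • w + (v*w + v*w))
        = (α*α) • b + γ • b + (δ • b + g)
          + ((α*η) • v + (α*η) • v) + ((α*(1/2)) • w + (α*(1/2)) • w) + (v*w + v*w)
          - (α • b + v + w) := by module
      _ = 0 := h0
  have hm1 : (α*α + γ + δ - α) • b ∈ PCeig F b 1 := Submodule.smul_mem _ _ hbm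
  have hm2 : (α*η + α*η - 1) • v + g ∈ PCeig F b η :=
    add_mem (Submodule.smul_mem _ _ hv) hg
  have hm3 : (α*(1/2) + α*(1/2) - 1) • w + (v*w + v*w) ∈ PCeig F b (1/2 : F) :=
    add_mem (Submodule.smul_mem _ _ hw) (add_mem hvwmem hvwmem)
  obtain ⟨z1, z2, z3⟩ := pc_indep3 h2 hη1 hηh hm1 hm2 hm3 hX
  have q1 : α*α + γ + δ - α = 0 := by
    rcases smul_eq_zero.mp z1 with h | h
    · exact h
    · exact absurd h hb0
  have hgval : g = ((1:F) - (α*η + α*η)) • v := by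
    have h := eq_neg_of_add_eq_zero_right z2
    rw [h, ← neg_smul]
    congr 1
    ring
  -- pairing the 1/2-component equation with w
  have q3 : (α*(1/2) + α*(1/2) - 1) * B w w
      + (((1:F) - (α*η + α*η)) * B v v + ((1:F) - (α*η + α*η)) * B v v) = 0 := by
    have h := congrArg (fun x => B x w) z3
    simp only [map_add, map_smul, LinearMap.add_apply, LinearMap.smul_apply, smul_eq_mul,
      LinearMap.zero_apply, map_zero] at h
    have hvww : B (v*w) w = ((1:F) - (α*η + α*η)) * B v v := by
      rw [hBfrob v w w, hww, map_add, map_smul, smul_eq_mul, hBvb, mul_zero, zero_add,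
        hgval, map_smul, smul_eq_mul]
    rw [hvww] at h
    linear_combination h
  -- the norm equation
  have q2 : α*α + B v v + B w w = 1 := by
    have hBcc := hBnorm c hc
    rw [hceq] at hBcc
    simp only [map_add, map_smul, LinearMap.add_apply, LinearMap.smul_apply, smul_eq_mul,
      hBbb, hBbv, hBbw, hBvb, hBvw, hBwb, hBwv] at hBcc
    linear_combination hBcc
  -- scalar elimination
  have E1c : 2*(α*α) + 2*(η * B v v) + B w w = 2*α := by
    linear_combination 2*q1 - 2*hγval - 2*hδval - (B w w)*h21
  have E5c : (α - 1) * B w w + 2*((1 - 2*(α*η)) * B v v) = 0 := by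
    linear_combination q3 - (α * B w w)*h21
  have hcube : 2*(1+η)*(α-1)^3 = 0 := by
    linear_combination (-(3 - α - 4*α*η))*E1c + ((2*η-1)*(1-α) + (3 - α - 4*α*η))*q2
      + (2*η-1)*E5c
  have h1η0 : (1:F) + η ≠ 0 := fun h => hηm (by linear_combination h)
  have hα1 : α = 1 := by
    have h3 : (α - 1)^3 = 0 := by
      rcases mul_eq_zero.mp hcube with h | h
      · rcases mul_eq_zero.mp h with h' | h'
        · exact absurd h' h2
        · exact absurd h' h1η0
      · exact h
    have h4 : α - 1 = 0 := pow_eq_zero_iff (by norm_num : 3 ≠ 0) |>.mp h3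
    exact sub_eq_zero.mp h4
  have hBbc : B b c = α := by
    rw [hceq]
    simp [hBbb, hBbv, hBbw]
  rw [hBbc, hα1]

end PC9Pair
section PC9Span

variable {F : Type*} [Field F] {A : Type*} [NonUnitalNonAssocCommRing A]
  [Module F A] [SMulCommClass F A A] [IsScalarTower F A A]

variable {η : F}

/-- The product of two primitive axes lies in the span of all primitive axes. -/
lemma pc_mul_mem_span (h2 : (2:F) ≠ 0) (hη1 : η ≠ 1) (hηh : η ≠ 1/2)
    {b c : A} (hb : IsPrimPCAxis F η b) (hc : IsPrimPCAxis F η c) :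
    b * c ∈ Submodule.span F {x : A | IsPrimPCAxis F η x} := by
  obtain ⟨hbA, hb0, hb1⟩ := hb
  have h21 : (2:F) * (1/2) = 1 := by rw [mul_one_div, div_self h2]
  have hcompl := pc_compl h2 hη1 hηh hbA
  set σ := miy (PCeig F b 1 ⊔ PCeig F b η) (PCeig F b (1/2 : F)) hcompl with hσdef
  have hσinv : ∀ y, σ (σ y) = y := miy_invol hcompl
  have hσmul : ∀ y z : A, σ (y * z) = σ y * σ z :=
    miy_mul hcompl (pc_EE hbA) (pc_EO hbA) hbA.fushh
  obtain ⟨u, hu, v, hv, w, hw, hceq0⟩ := pc_decomp hbA c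
  rw [hb1] at hu
  obtain ⟨β, hβ⟩ := Submodule.mem_span_singleton.mp hu
  have hbb : b * b = b := hbA.idem
  have hbv : b * v = η • v := hv
  have hbw : b * w = (1/2:F) • w := hw
  have hceq : c = (β • b + v) + w := by rw [hceq0, hβ]
  have hmemE : β • b + v ∈ PCeig F b 1 ⊔ PCeig F b η :=
    add_mem (Submodule.mem_sup_left (Submodule.smul_mem _ _ (pc_self_mem hbb)))
      (Submodule.mem_sup_right hv)
  have hc' : σ c = (β • b + v) - w := by
    rw [hceq]; exact miy_decomp hcompl hmemE hw
  have hc'ax : IsPrimPCAxis F η (σ c) := pc_sigma_axis σ hσinv hσmul hc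
  have hbc : b * c = β • b + η • v + (1/2:F) • w := by
    rw [hceq, mul_add, mul_add, mul_smul_comm, hbb, hbv, hbw]
  have hfin : b * c = ((1-η)*β) • b + ((1/2)*(η + 1/2)) • c + ((1/2)*(η - 1/2)) • (σ c) := by
    rw [hbc, hc', hceq]
    match_scalars
    · linear_combination (-(η*β))*h21
    · linear_combination (-η)*h21
    · linear_combination (-(1/2:F))*h21
  rw [hfin]
  refine add_mem (add_mem ?_ ?_) ?_
  · exact Submodule.smul_mem _ _ (Submodule.subset_span ⟨hbA, hb0, hb1⟩)
  · exact Submodule.smul_mem _ _ (Submodule.subset_span hc)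
  · exact Submodule.smul_mem _ _ (Submodule.subset_span hc'ax)

/-- In a primitive `PC(η)`-axial algebra, the primitive axes span the algebra. -/
lemma pc_span_top (h2 : (2:F) ≠ 0) (hη1 : η ≠ 1) (hηh : η ≠ 1/2)
    (hA : IsPrimPCAxialAlgebra F A η) :
    Submodule.span F {x : A | IsPrimPCAxis F η x} = ⊤ := by
  obtain ⟨X, -, hax, hadj⟩ := hA
  have hmul : ∀ x ∈ Submodule.span F {x : A | IsPrimPCAxis F η x},
      ∀ y ∈ Submodule.span F {x : A | IsPrimPCAxis F η x},
      x * y ∈ Submodule.span F {x : A | IsPrimPCAxis F η x} := by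
    intro x hx
    induction hx using Submodule.span_induction with
    | mem b hb =>
      intro y hy
      induction hy using Submodule.span_induction with
      | mem c hcm => exact pc_mul_mem_span h2 hη1 hηh hb hcm
      | zero => rw [mul_zero]; exact zero_mem _
      | add y z hy hz ihy ihz => rw [mul_add]; exact add_mem ihy ihz
      | smul r y hy ihy => rw [mul_smul_comm]; exact Submodule.smul_mem _ _ ihy
    | zero => intro y hy; rw [zero_mul]; exact zero_mem _
    | add x z hx hz ihx ihz => intro y hy; rw [add_mul]; exact add_mem (ihx y hy) (ihz y hy)
    | smul r x hx ihx =>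
      intro y hy; rw [smul_mul_assoc]; exact Submodule.smul_mem _ _ (ihx y hy)
  rw [eq_top_iff]
  intro y htriv
  clear htriv
  have hy : y ∈ NonUnitalAlgebra.adjoin F X := by rw [hadj]; trivial
  induction hy using NonUnitalAlgebra.adjoin_induction with
  | mem x hx => exact Submodule.subset_span (hax x hx)
  | add x z hx hz ihx ihz => exact add_mem ihx ihz
  | zero => exact zero_mem _
  | mul x z hx hz ihx ihz => exact hmul x ihx z ihz
  | smul r x hx ihx => exact Submodule.smul_mem _ _ ihx

end PC9Span
/-- for `η ≠ -1`, the map `w_a = (a, ·)` attached to a primitive axis `a` of a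
primitive `PC(η)`-axial algebra (with Frobenius form normalized by `(a,a) = 1` on primitive
axes) is a nonzero algebra homomorphism, independent of `a`, and `(x,y) = w_a(xy)`.
In particular `A` is a baric algebra. -/
theorem stmt9 (η : F) (h2 : (2 : F) ≠ 0) (hη1 : η ≠ 1) (hηh : η ≠ 1 / 2) (hηm : η ≠ -1)
    (hA : IsPrimPCAxialAlgebra F A η)
    (B : A →ₗ[F] A →ₗ[F] F) (hB0 : B ≠ 0)
    (hBsymm : ∀ x y : A, B x y = B y x)
    (hBfrob : ∀ x y z : A, B (x * y) z = B x (y * z))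
    (hBnorm : ∀ a : A, IsPrimPCAxis F η a → B a a = 1)
    (a : A) (ha : IsPrimPCAxis F η a) :
    (B a ≠ 0) ∧
    (∀ x y : A, B a (x * y) = B a x * B a y) ∧
    (∀ b : A, IsPrimPCAxis F η b → ∀ x : A, B a x = B b x) ∧
    (∀ x y : A, B x y = B a (x * y)) := by
  have hpair : ∀ b c : A, IsPrimPCAxis F η b → IsPrimPCAxis F η c → B b c = 1 :=
    fun b c hb hc => pc_pair h2 hη1 hηh hηm B hBsymm hBfrob hBnorm hb hc
  have hEq : ∀ x y : A, B x y = B a x * B a y := by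
    have htop := pc_span_top h2 hη1 hηh hA
    intro x y
    have hx : x ∈ Submodule.span F {x : A | IsPrimPCAxis F η x} := by rw [htop]; trivial
    have hy : y ∈ Submodule.span F {x : A | IsPrimPCAxis F η x} := by rw [htop]; trivial
    clear htop
    induction hx using Submodule.span_induction with
    | mem b hb =>
      induction hy using Submodule.span_induction with
      | mem c hcm =>
        rw [hpair b c hb hcm, hpair a b ha hb, hpair a c ha hcm, one_mul]
      | zero => simp
      | add u v hu hv ihu ihv =>
        simp only [map_add]
        rw [ihu, ihv]; ring
      | smul r u hu ihu =>
        simp only [map_smul, smul_eq_mul]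
        rw [ihu]; ring
    | zero => simp
    | add u v hu hv ihu ihv =>
      simp only [map_add, LinearMap.add_apply]
      rw [ihu, ihv]; ring
    | smul r u hu ihu =>
      simp only [map_smul, LinearMap.smul_apply, smul_eq_mul]
      rw [ihu]; ring
  have hmulB : ∀ x y : A, B a (x * y) = B a x * B a y := by
    intro x y
    have h1 : B (a * x) y = B a (x * y) := hBfrob a x y
    have h2' : B (a * a) x = B a (a * x) := hBfrob a a x
    rw [← h1, hEq (a * x) y, ← h2', ha.1.idem]
  refine ⟨?_, hmulB, ?_, ?_⟩
  · intro h0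
    have h := hBnorm a ha
    rw [h0] at h
    simp only [LinearMap.zero_apply] at h
    exact one_ne_zero h.symm
  · intro b hbax x
    rw [hEq b x, hpair a b ha hbax, one_mul]
  · intro x y
    rw [hEq x y, hmulB]
end

section
/- Let A be a primitive PC(η)-axial algebra with Frobenius form (·,·) normalized by (a,a) = 1 on primitive axes. Let a be a primitive axis and x, y ∈ A, and write x = α·a + x_η + x_{1/2}, y = γ·a + y_η + y_{1/2} with x_η, y_η ∈ A_η(a), x_{1/2}, y_{1/2} ∈ A_{1/2}(a), where α = (a,x), γ = (a,y); set β = (x,y) and ψ = (a, xy). Then (x_η, y_η) = (αγ + β - 2ψ)/(1 - 2η) and (x_{1/2}, y_{1/2}) = 2·((η-1)αγ - ηβ + ψ)/(1 - 2η). -/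
open Submodule

variable {F : Type*} [Field F] {A : Type*} [NonUnitalNonAssocCommRing A]
  [Module F A] [SMulCommClass F A A] [IsScalarTower F A A]

/- Eigenvectors of `a` for distinct eigenvalues are orthogonal for the Frobenius form, so expanding
`(x, y)` and `(a, xy) = (ax, y)` along the decomposition of `x` and `y` gives two linear equations
`β = αγ + (x_η, y_η) + (x_{1/2}, y_{1/2})` and `ψ = αγ + η (x_η, y_η) + ½ (x_{1/2}, y_{1/2})`,
which are solved for the two unknowns. Here `αγ (a, a) = αγ` because pairing `a` with `x` gives
`α (a, a) = α`. -/

section FrobeniusForm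

variable {F A : Type*} [Field F] [NonUnitalNonAssocCommRing A] [Module F A]
  [SMulCommClass F A A] (B : A →ₗ[F] A →ₗ[F] F)
  (hBfrob : ∀ x y z : A, B (x * y) z = B x (y * z))
include hBfrob

theorem frob_eq_zero_of_mem_PCeig {a u v : A} {lam mu : F} (hu : u ∈ PCeig F a lam)
    (hv : v ∈ PCeig F a mu) (hne : lam ≠ mu) : B u v = 0 := by
  have hswap : lam * B u v = mu * B u v := by
    have h := hBfrob u a v
    rw [mul_comm u a, hu.out, hv.out] at h
    simpa only [map_smul, LinearMap.smul_apply, smul_eq_mul] using h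
  by_contra hB
  exact hne (mul_right_cancel₀ hB hswap)

theorem frob_eq_of_eigen_decomp {a x y xe xh ye yh : A} {α γ lam mu : F}
    (ha : a ∈ PCeig F a 1) (h1 : (1 : F) ≠ lam) (h2 : (1 : F) ≠ mu) (hlm : lam ≠ mu)
    (hxe : xe ∈ PCeig F a lam) (hxh : xh ∈ PCeig F a mu)
    (hye : ye ∈ PCeig F a lam) (hyh : yh ∈ PCeig F a mu)
    (hx : x = α • a + xe + xh) (hy : y = γ • a + ye + yh) :
    B x y = α * γ * B a a + B xe ye + B xh yh := by
  have orth {u v : A} {l m : F} (hu : u ∈ PCeig F a l) (hv : v ∈ PCeig F a m) (hne : l ≠ m) :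
      B u v = 0 := frob_eq_zero_of_mem_PCeig B hBfrob hu hv hne
  subst hx hy
  simp only [map_add, map_smul, LinearMap.add_apply, LinearMap.smul_apply, smul_eq_mul,
    orth ha hye h1, orth ha hyh h2, orth hxe ha h1.symm, orth hxe hyh hlm,
    orth hxh ha h2.symm, orth hxh hye hlm.symm]
  ring

theorem frob_mul_eq_of_eigen_decomp {a x y xe xh ye yh : A} {α γ lam mu : F}
    (ha : a ∈ PCeig F a 1) (h1 : (1 : F) ≠ lam) (h2 : (1 : F) ≠ mu) (hlm : lam ≠ mu)
    (hxe : xe ∈ PCeig F a lam) (hxh : xh ∈ PCeig F a mu)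
    (hye : ye ∈ PCeig F a lam) (hyh : yh ∈ PCeig F a mu)
    (hx : x = α • a + xe + xh) (hy : y = γ • a + ye + yh) :
    B a (x * y) = α * γ * B a a + lam * B xe ye + mu * B xh yh := by
  have hax : a * x = α • a + lam • xe + mu • xh := by
    rw [hx, mul_add, mul_add, mul_smul_comm, ha.out, one_smul, hxe.out, hxh.out]
  rw [← hBfrob, frob_eq_of_eigen_decomp B hBfrob ha h1 h2 hlm (smul_mem _ lam hxe)
    (smul_mem _ mu hxh) hye hyh hax hy]
  simp only [map_smul, LinearMap.smul_apply, smul_eq_mul]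

end FrobeniusForm

theorem stmt13_general (η : F) (h2 : (2 : F) ≠ 0) (hη1 : η ≠ 1) (hηh : η ≠ 1 / 2)
    (B : A →ₗ[F] A →ₗ[F] F)
    (hBfrob : ∀ x y z : A, B (x * y) z = B x (y * z))
    (a : A) (ha : IsPrimPCAxis F η a)
    (x y xe xh ye yh : A)
    (hxe : xe ∈ PCeig F a η) (hxh : xh ∈ PCeig F a (1 / 2 : F))
    (hye : ye ∈ PCeig F a η) (hyh : yh ∈ PCeig F a (1 / 2 : F))
    (hx : x = (B a x) • a + xe + xh) (hy : y = (B a y) • a + ye + yh) :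
    B xe ye = (B a x * B a y + B x y - 2 * B a (x * y)) / (1 - 2 * η) ∧
    B xh yh = 2 * ((η - 1) * (B a x * B a y) - η * B x y + B a (x * y)) / (1 - 2 * η) := by
  have haa : a ∈ PCeig F a 1 := by rw [PCeig, Submodule.mem_mk]; simp [ha.1.idem]
  have h1η : (1 : F) ≠ η := hη1.symm
  have h1h : (1 : F) ≠ 1 / 2 := by
    rw [ne_eq, eq_div_iff h2, one_mul]
    exact fun h => one_ne_zero (by linear_combination h)
  have hden : (1 : F) - 2 * η ≠ 0 := by
    refine fun h => hηh ?_
    rw [eq_div_iff h2]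
    linear_combination -h
  have hβ := frob_eq_of_eigen_decomp B hBfrob haa h1η h1h hηh hxe hxh hye hyh hx hy
  have hψ := frob_mul_eq_of_eigen_decomp B hBfrob haa h1η h1h hηh hxe hxh hye hyh hx hy
  have hα : B a x * B a a = B a x := by
    conv_rhs => rw [hx]
    rw [map_add, map_add, map_smul, smul_eq_mul, frob_eq_zero_of_mem_PCeig B hBfrob haa hxe h1η,
      frob_eq_zero_of_mem_PCeig B hBfrob haa hxh h1h, add_zero, add_zero]
  have hhalf : (2 : F)⁻¹ * 2 = 1 := inv_mul_cancel₀ h2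
  constructor <;> rw [eq_div_iff hden]
  · linear_combination 2 * hψ - hβ + B xh yh * hhalf + B a y * hα
  · linear_combination (2 * η) * hβ - 2 * hψ - B xh yh * hhalf + (2 * η - 2) * B a y * hα

/-- values of the normalized Frobenius form on the `η`- and `1/2`-components of
elements `x`, `y` with respect to a primitive axis `a`. -/
theorem stmt13 (η : F) (h2 : (2 : F) ≠ 0) (hη1 : η ≠ 1) (hηh : η ≠ 1 / 2)
    (hA : IsPrimPCAxialAlgebra F A η)
    (B : A →ₗ[F] A →ₗ[F] F) (hB0 : B ≠ 0)
    (hBsymm : ∀ x y : A, B x y = B y x)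
    (hBfrob : ∀ x y z : A, B (x * y) z = B x (y * z))
    (hBnorm : ∀ a : A, IsPrimPCAxis F η a → B a a = 1)
    (a : A) (ha : IsPrimPCAxis F η a)
    (x y xe xh ye yh : A)
    (hxe : xe ∈ PCeig F a η) (hxh : xh ∈ PCeig F a (1 / 2 : F))
    (hye : ye ∈ PCeig F a η) (hyh : yh ∈ PCeig F a (1 / 2 : F))
    (hx : x = (B a x) • a + xe + xh) (hy : y = (B a y) • a + ye + yh) :
    B xe ye = (B a x * B a y + B x y - 2 * B a (x * y)) / (1 - 2 * η) ∧
    B xh yh = 2 * ((η - 1) * (B a x * B a y) - η * B x y + B a (x * y)) / (1 - 2 * η) :=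
  stmt13_general η h2 hη1 hηh B hBfrob a ha x y xe xh ye yh hxe hxh hye hyh hx hy
end
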